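/- arXiv:2109.07313 — 4 statements merged into one kernel-verified Lean document; each statement's English description precedes it below -/
import Mathlib

section
/- Let there be 3 agents and a finite set M of indivisible chores with additive bi-valued cost functions taking values in {ε, 1} for some 0 ≤ ε < 1, and suppose no two agents have identical cost functions. Suppose every inconsistent item (an item whose cost differs between some two agents) is large only to exactly one agent, and let L_i denote the set of items that are large only to agent i. If |L_i| ≥ 2 for some agent i, then there exists an EFX allocation. -/
open Finset

/-- No-exception conditions for the count matrix.
Row i of the matrix: (s_i, b_i, p_i, q_i, r_i) = counts of classes S, B, L0, L1, L2. -/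
def conds' (s b l0 l1 l2 sa ba p0 q0 r0 sb bb p1 q1 r1 sc bc p2 q2 r2 : ℕ) : Prop :=
  sa + sb + sc = s ∧ ba + bb + bc = b ∧ p0 + p1 + p2 = l0 ∧ q0 + q1 + q2 = l1 ∧
  r0 + r1 + r2 = l2 ∧
  (sa+ba+p0+q0+r0) ≤ (sb+bb+p1+q1+r1) + 1 ∧ (sb+bb+p1+q1+r1) ≤ (sa+ba+p0+q0+r0) + 1 ∧
  (sa+ba+p0+q0+r0) ≤ (sc+bc+p2+q2+r2) + 1 ∧ (sc+bc+p2+q2+r2) ≤ (sa+ba+p0+q0+r0) + 1 ∧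
  (sb+bb+p1+q1+r1) ≤ (sc+bc+p2+q2+r2) + 1 ∧ (sc+bc+p2+q2+r2) ≤ (sb+bb+p1+q1+r1) + 1 ∧
  ba + p0 ≤ bb + p1 ∧ ba + p0 ≤ bc + p2 ∧
  bb + q1 ≤ ba + q0 ∧ bb + q1 ≤ bc + q2 ∧
  bc + r2 ≤ ba + r0 ∧ bc + r2 ≤ bb + r1

/-- Conditions with the all-large exception. -/
def conds (s b l0 l1 l2 sa ba p0 q0 r0 sb bb p1 q1 r1 sc bc p2 q2 r2 : ℕ) : Prop :=
  sa + sb + sc = s ∧ ba + bb + bc = b ∧ p0 + p1 + p2 = l0 ∧ q0 + q1 + q2 = l1 ∧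
  r0 + r1 + r2 = l2 ∧
  (sa+ba+p0+q0+r0) ≤ (sb+bb+p1+q1+r1) + 1 ∧ (sb+bb+p1+q1+r1) ≤ (sa+ba+p0+q0+r0) + 1 ∧
  (sa+ba+p0+q0+r0) ≤ (sc+bc+p2+q2+r2) + 1 ∧ (sc+bc+p2+q2+r2) ≤ (sa+ba+p0+q0+r0) + 1 ∧
  (sb+bb+p1+q1+r1) ≤ (sc+bc+p2+q2+r2) + 1 ∧ (sc+bc+p2+q2+r2) ≤ (sb+bb+p1+q1+r1) + 1 ∧
  (ba + p0 ≤ bb + p1 ∨ (sa = 0 ∧ q0 = 0 ∧ r0 = 0 ∧ ba + p0 ≤ bb + p1 + 1)) ∧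
  (ba + p0 ≤ bc + p2 ∨ (sa = 0 ∧ q0 = 0 ∧ r0 = 0 ∧ ba + p0 ≤ bc + p2 + 1)) ∧
  (bb + q1 ≤ ba + q0 ∨ (sb = 0 ∧ p1 = 0 ∧ r1 = 0 ∧ bb + q1 ≤ ba + q0 + 1)) ∧
  (bb + q1 ≤ bc + q2 ∨ (sb = 0 ∧ p1 = 0 ∧ r1 = 0 ∧ bb + q1 ≤ bc + q2 + 1)) ∧
  (bc + r2 ≤ ba + r0 ∨ (sc = 0 ∧ p2 = 0 ∧ q2 = 0 ∧ bc + r2 ≤ ba + r0 + 1)) ∧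
  (bc + r2 ≤ bb + r1 ∨ (sc = 0 ∧ p2 = 0 ∧ q2 = 0 ∧ bc + r2 ≤ bb + r1 + 1))

theorem conds'_imp {s b l0 l1 l2 sa ba p0 q0 r0 sb bb p1 q1 r1 sc bc p2 q2 r2 : ℕ}
    (h : conds' s b l0 l1 l2 sa ba p0 q0 r0 sb bb p1 q1 r1 sc bc p2 q2 r2) :
    conds s b l0 l1 l2 sa ba p0 q0 r0 sb bb p1 q1 r1 sc bc p2 q2 r2 := by
  unfold conds' at h; unfold conds; tauto

/-- Existence form (no-exception). -/
def EX' (s b l0 l1 l2 : ℕ) : Prop :=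
  ∃ sa ba p0 q0 r0 sb bb p1 q1 r1 sc bc p2 q2 r2 : ℕ,
    conds' s b l0 l1 l2 sa ba p0 q0 r0 sb bb p1 q1 r1 sc bc p2 q2 r2

def EX (s b l0 l1 l2 : ℕ) : Prop :=
  ∃ sa ba p0 q0 r0 sb bb p1 q1 r1 sc bc p2 q2 r2 : ℕ,
    conds s b l0 l1 l2 sa ba p0 q0 r0 sb bb p1 q1 r1 sc bc p2 q2 r2

theorem EX'_imp {s b l0 l1 l2 : ℕ} (h : EX' s b l0 l1 l2) : EX s b l0 l1 l2 := by
  obtain ⟨a1,a2,a3,a4,a5,a6,a7,a8,a9,a10,a11,a12,a13,a14,a15,h⟩ := h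
  exact ⟨a1,a2,a3,a4,a5,a6,a7,a8,a9,a10,a11,a12,a13,a14,a15, conds'_imp h⟩

/-- add one S item to a minimal row -/
theorem pad' {s b l0 l1 l2 : ℕ} (h : EX' s b l0 l1 l2) : EX' (s+1) b l0 l1 l2 := by
  obtain ⟨sa,ba,p0,q0,r0,sb,bb,p1,q1,r1,sc,bc,p2,q2,r2,h⟩ := h
  unfold conds' at h
  rcases le_or_gt (sa+ba+p0+q0+r0) (sb+bb+p1+q1+r1) with h1 | h1
  · rcases le_or_gt (sa+ba+p0+q0+r0) (sc+bc+p2+q2+r2) with h2 | h2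
    · exact ⟨sa+1,ba,p0,q0,r0,sb,bb,p1,q1,r1,sc,bc,p2,q2,r2, by unfold conds'; omega⟩
    · exact ⟨sa,ba,p0,q0,r0,sb,bb,p1,q1,r1,sc+1,bc,p2,q2,r2, by unfold conds'; omega⟩
  · rcases le_or_gt (sb+bb+p1+q1+r1) (sc+bc+p2+q2+r2) with h2 | h2
    · exact ⟨sa,ba,p0,q0,r0,sb+1,bb,p1,q1,r1,sc,bc,p2,q2,r2, by unfold conds'; omega⟩
    · exact ⟨sa,ba,p0,q0,r0,sb,bb,p1,q1,r1,sc+1,bc,p2,q2,r2, by unfold conds'; omega⟩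

theorem padN' {b l0 l1 l2 : ℕ} (h : EX' 0 b l0 l1 l2) (s' : ℕ) : EX' s' b l0 l1 l2 := by
  induction s' with
  | zero => exact h
  | succ n ih => exact pad' ih

theorem padN'' {b l0 l1 l2 : ℕ} (h : EX' 1 b l0 l1 l2) (s' : ℕ) : EX' (s'+1) b l0 l1 l2 := by
  induction s' with
  | zero => exact h
  | succ n ih => exact pad' ih

/-- add one B item to every row; preserves conditions (incl. exception). -/
theorem addB {s b l0 l1 l2 : ℕ} (h : EX s b l0 l1 l2) : EX s (b+3) l0 l1 l2 := by
  obtain ⟨sa,ba,p0,q0,r0,sb,bb,p1,q1,r1,sc,bc,p2,q2,r2,h⟩ := h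
  exact ⟨sa,ba+1,p0,q0,r0,sb,bb+1,p1,q1,r1,sc,bc+1,p2,q2,r2, by
    unfold conds at *; omega⟩

theorem addB' {s b l0 l1 l2 : ℕ} (h : EX' s b l0 l1 l2) : EX' s (b+3) l0 l1 l2 := by
  obtain ⟨sa,ba,p0,q0,r0,sb,bb,p1,q1,r1,sc,bc,p2,q2,r2,h⟩ := h
  exact ⟨sa,ba+1,p0,q0,r0,sb,bb+1,p1,q1,r1,sc,bc+1,p2,q2,r2, by
    unfold conds' at *; omega⟩

theorem addL0' {s b l0 l1 l2 : ℕ} (h : EX' s b l0 l1 l2) : EX' s b (l0+3) l1 l2 := by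
  obtain ⟨sa,ba,p0,q0,r0,sb,bb,p1,q1,r1,sc,bc,p2,q2,r2,h⟩ := h
  exact ⟨sa,ba,p0+1,q0,r0,sb,bb,p1+1,q1,r1,sc,bc,p2+1,q2,r2, by
    unfold conds' at *; omega⟩

theorem addL1' {s b l0 l1 l2 : ℕ} (h : EX' s b l0 l1 l2) : EX' s b l0 (l1+3) l2 := by
  obtain ⟨sa,ba,p0,q0,r0,sb,bb,p1,q1,r1,sc,bc,p2,q2,r2,h⟩ := h
  exact ⟨sa,ba,p0,q0+1,r0,sb,bb,p1,q1+1,r1,sc,bc,p2,q2+1,r2, by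
    unfold conds' at *; omega⟩

theorem addL2' {s b l0 l1 l2 : ℕ} (h : EX' s b l0 l1 l2) : EX' s b l0 l1 (l2+3) := by
  obtain ⟨sa,ba,p0,q0,r0,sb,bb,p1,q1,r1,sc,bc,p2,q2,r2,h⟩ := h
  exact ⟨sa,ba,p0,q0,r0+1,sb,bb,p1,q1,r1+1,sc,bc,p2,q2,r2+1, by
    unfold conds' at *; omega⟩

theorem core (n : ℕ) : ∀ b l0 l1 l2 : ℕ, b + l0 + l1 + l2 ≤ n → 2 ≤ l0 → 1 ≤ l1 →
    ¬(b % 3 = 2 ∧ l0 = 3 ∧ l1 = 1 ∧ l2 = 0) → EX' 0 b l0 l1 l2 := by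
  induction n with
  | zero => intro b l0 l1 l2 h h2 h1 _; omega
  | succ n ih =>
    intro b l0 l1 l2 hn h2 h1 hbad
    by_cases cL2 : 3 ≤ l2 ∧ ¬(b % 3 = 2 ∧ l0 = 3 ∧ l1 = 1 ∧ l2 - 3 = 0)
    · have h' := addL2' (ih b l0 l1 (l2-3) (by omega) h2 h1 (by omega))
      have e : l2 - 3 + 3 = l2 := by omega
      rwa [e] at h'
    by_cases cL1 : 4 ≤ l1 ∧ ¬(b % 3 = 2 ∧ l0 = 3 ∧ l1 - 3 = 1 ∧ l2 = 0)
    · have h' := addL1' (ih b l0 (l1-3) l2 (by omega) h2 (by omega) (by omega))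
      have e : l1 - 3 + 3 = l1 := by omega
      rwa [e] at h'
    by_cases cL0 : 5 ≤ l0 ∧ ¬(b % 3 = 2 ∧ l0 - 3 = 3 ∧ l1 = 1 ∧ l2 = 0)
    · have h' := addL0' (ih b (l0-3) l1 l2 (by omega) (by omega) h1 (by omega))
      have e : l0 - 3 + 3 = l0 := by omega
      rwa [e] at h'
    by_cases cB : 3 ≤ b
    · have h' := addB' (ih (b-3) l0 l1 l2 (by omega) h2 h1 (by omega))
      have e : b - 3 + 3 = b := by omega
      rwa [e] at h'
    have hb : b = 0 ∨ b = 1 ∨ b = 2 := by omega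
    have hl0 : l0 = 2 ∨ l0 = 3 ∨ l0 = 4 ∨ l0 = 5 ∨ l0 = 6 := by omega
    have hl1 : l1 = 1 ∨ l1 = 2 ∨ l1 = 3 ∨ l1 = 4 := by omega
    have hl2 : l2 = 0 ∨ l2 = 1 ∨ l2 = 2 ∨ l2 = 3 := by omega
    clear hn ih
    rcases hb with rfl|rfl|rfl
    · rcases hl0 with rfl|rfl|rfl|rfl|rfl
      · rcases hl1 with rfl|rfl|rfl|rfl
        · rcases hl2 with rfl|rfl|rfl|rfl
          · exact ⟨0, 0, 0, 1, 0, 0, 0, 1, 0, 0, 0, 0, 1, 0, 0, by unfold conds'; omega⟩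
          · exact ⟨0, 0, 0, 1, 0, 0, 0, 0, 0, 1, 0, 0, 2, 0, 0, by unfold conds'; omega⟩
          · exact ⟨0, 0, 0, 1, 0, 0, 0, 0, 0, 2, 0, 0, 2, 0, 0, by unfold conds'; omega⟩
          · exfalso; omega
        · rcases hl2 with rfl|rfl|rfl|rfl
          · exact ⟨0, 0, 0, 1, 0, 0, 0, 1, 0, 0, 0, 0, 1, 1, 0, by unfold conds'; omega⟩
          · exact ⟨0, 0, 0, 2, 0, 0, 0, 0, 0, 1, 0, 0, 2, 0, 0, by unfold conds'; omega⟩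
          · exact ⟨0, 0, 0, 2, 0, 0, 0, 0, 0, 2, 0, 0, 2, 0, 0, by unfold conds'; omega⟩
          · exfalso; omega
        · rcases hl2 with rfl|rfl|rfl|rfl
          · exact ⟨0, 0, 0, 1, 0, 0, 0, 1, 1, 0, 0, 0, 1, 1, 0, by unfold conds'; omega⟩
          · exact ⟨0, 0, 0, 1, 1, 0, 0, 1, 1, 0, 0, 0, 1, 1, 0, by unfold conds'; omega⟩
          · exact ⟨0, 0, 0, 1, 1, 0, 0, 0, 1, 1, 0, 0, 2, 1, 0, by unfold conds'; omega⟩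
          · exfalso; omega
        · rcases hl2 with rfl|rfl|rfl|rfl
          · exfalso; omega
          · exfalso; omega
          · exfalso; omega
          · exfalso; omega
      · rcases hl1 with rfl|rfl|rfl|rfl
        · rcases hl2 with rfl|rfl|rfl|rfl
          · exact ⟨0, 0, 0, 1, 0, 0, 0, 1, 0, 0, 0, 0, 2, 0, 0, by unfold conds'; omega⟩
          · exact ⟨0, 0, 0, 1, 0, 0, 0, 1, 0, 1, 0, 0, 2, 0, 0, by unfold conds'; omega⟩
          · exact ⟨0, 0, 0, 1, 1, 0, 0, 1, 0, 1, 0, 0, 2, 0, 0, by unfold conds'; omega⟩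
          · exfalso; omega
        · rcases hl2 with rfl|rfl|rfl|rfl
          · exact ⟨0, 0, 0, 2, 0, 0, 0, 1, 0, 0, 0, 0, 2, 0, 0, by unfold conds'; omega⟩
          · exact ⟨0, 0, 0, 2, 0, 0, 0, 1, 0, 1, 0, 0, 2, 0, 0, by unfold conds'; omega⟩
          · exact ⟨0, 0, 0, 2, 0, 0, 0, 0, 0, 2, 0, 0, 3, 0, 0, by unfold conds'; omega⟩
          · exfalso; omega
        · rcases hl2 with rfl|rfl|rfl|rfl
          · exact ⟨0, 0, 0, 2, 0, 0, 0, 2, 0, 0, 0, 0, 1, 1, 0, by unfold conds'; omega⟩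
          · exact ⟨0, 0, 0, 1, 1, 0, 0, 1, 1, 0, 0, 0, 2, 1, 0, by unfold conds'; omega⟩
          · exact ⟨0, 0, 0, 3, 0, 0, 0, 0, 0, 2, 0, 0, 3, 0, 0, by unfold conds'; omega⟩
          · exfalso; omega
        · rcases hl2 with rfl|rfl|rfl|rfl
          · exfalso; omega
          · exfalso; omega
          · exfalso; omega
          · exfalso; omega
      · rcases hl1 with rfl|rfl|rfl|rfl
        · rcases hl2 with rfl|rfl|rfl|rfl
          · exact ⟨0, 0, 0, 1, 0, 0, 0, 2, 0, 0, 0, 0, 2, 0, 0, by unfold conds'; omega⟩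
          · exact ⟨0, 0, 0, 1, 1, 0, 0, 2, 0, 0, 0, 0, 2, 0, 0, by unfold conds'; omega⟩
          · exact ⟨0, 0, 0, 1, 1, 0, 0, 1, 0, 1, 0, 0, 3, 0, 0, by unfold conds'; omega⟩
          · exfalso; omega
        · rcases hl2 with rfl|rfl|rfl|rfl
          · exact ⟨0, 0, 0, 2, 0, 0, 0, 2, 0, 0, 0, 0, 2, 0, 0, by unfold conds'; omega⟩
          · exact ⟨0, 0, 0, 2, 0, 0, 0, 1, 0, 1, 0, 0, 3, 0, 0, by unfold conds'; omega⟩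
          · exact ⟨0, 0, 0, 2, 0, 0, 0, 1, 0, 2, 0, 0, 3, 0, 0, by unfold conds'; omega⟩
          · exfalso; omega
        · rcases hl2 with rfl|rfl|rfl|rfl
          · exact ⟨0, 0, 0, 2, 0, 0, 0, 2, 0, 0, 0, 0, 2, 1, 0, by unfold conds'; omega⟩
          · exact ⟨0, 0, 0, 3, 0, 0, 0, 1, 0, 1, 0, 0, 3, 0, 0, by unfold conds'; omega⟩
          · exact ⟨0, 0, 0, 3, 0, 0, 0, 1, 0, 2, 0, 0, 3, 0, 0, by unfold conds'; omega⟩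
          · exfalso; omega
        · rcases hl2 with rfl|rfl|rfl|rfl
          · exfalso; omega
          · exfalso; omega
          · exfalso; omega
          · exfalso; omega
      · rcases hl1 with rfl|rfl|rfl|rfl
        · rcases hl2 with rfl|rfl|rfl|rfl
          · exfalso; omega
          · exfalso; omega
          · exfalso; omega
          · exfalso; omega
        · rcases hl2 with rfl|rfl|rfl|rfl
          · exfalso; omega
          · exfalso; omega
          · exfalso; omega
          · exfalso; omega
        · rcases hl2 with rfl|rfl|rfl|rfl
          · exfalso; omega
          · exfalso; omega
          · exfalso; omega
          · exfalso; omega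
        · rcases hl2 with rfl|rfl|rfl|rfl
          · exfalso; omega
          · exfalso; omega
          · exfalso; omega
          · exfalso; omega
      · rcases hl1 with rfl|rfl|rfl|rfl
        · rcases hl2 with rfl|rfl|rfl|rfl
          · exfalso; omega
          · exfalso; omega
          · exfalso; omega
          · exfalso; omega
        · rcases hl2 with rfl|rfl|rfl|rfl
          · exfalso; omega
          · exfalso; omega
          · exfalso; omega
          · exfalso; omega
        · rcases hl2 with rfl|rfl|rfl|rfl
          · exfalso; omega
          · exfalso; omega
          · exfalso; omega
          · exfalso; omega
        · rcases hl2 with rfl|rfl|rfl|rfl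
          · exfalso; omega
          · exfalso; omega
          · exfalso; omega
          · exfalso; omega
    · rcases hl0 with rfl|rfl|rfl|rfl|rfl
      · rcases hl1 with rfl|rfl|rfl|rfl
        · rcases hl2 with rfl|rfl|rfl|rfl
          · exact ⟨0, 1, 0, 0, 0, 0, 0, 1, 0, 0, 0, 0, 1, 1, 0, by unfold conds'; omega⟩
          · exact ⟨0, 1, 0, 0, 0, 0, 0, 1, 0, 1, 0, 0, 1, 1, 0, by unfold conds'; omega⟩
          · exact ⟨0, 0, 0, 1, 1, 0, 0, 1, 0, 1, 0, 1, 1, 0, 0, by unfold conds'; omega⟩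
          · exfalso; omega
        · rcases hl2 with rfl|rfl|rfl|rfl
          · exact ⟨0, 0, 0, 1, 0, 0, 1, 1, 0, 0, 0, 0, 1, 1, 0, by unfold conds'; omega⟩
          · exact ⟨0, 0, 0, 1, 1, 0, 1, 1, 0, 0, 0, 0, 1, 1, 0, by unfold conds'; omega⟩
          · exact ⟨0, 0, 0, 1, 1, 0, 0, 0, 1, 1, 0, 1, 2, 0, 0, by unfold conds'; omega⟩
          · exfalso; omega
        · rcases hl2 with rfl|rfl|rfl|rfl
          · exact ⟨0, 0, 0, 2, 0, 0, 1, 1, 0, 0, 0, 0, 1, 1, 0, by unfold conds'; omega⟩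
          · exact ⟨0, 0, 0, 2, 0, 0, 1, 0, 0, 1, 0, 0, 2, 1, 0, by unfold conds'; omega⟩
          · exact ⟨0, 0, 0, 2, 1, 0, 0, 0, 1, 1, 0, 1, 2, 0, 0, by unfold conds'; omega⟩
          · exfalso; omega
        · rcases hl2 with rfl|rfl|rfl|rfl
          · exfalso; omega
          · exfalso; omega
          · exfalso; omega
          · exfalso; omega
      · rcases hl1 with rfl|rfl|rfl|rfl
        · rcases hl2 with rfl|rfl|rfl|rfl
          · exact ⟨0, 1, 0, 1, 0, 0, 0, 1, 0, 0, 0, 0, 2, 0, 0, by unfold conds'; omega⟩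
          · exact ⟨0, 1, 0, 1, 0, 0, 0, 1, 0, 1, 0, 0, 2, 0, 0, by unfold conds'; omega⟩
          · exact ⟨0, 0, 0, 1, 1, 0, 0, 1, 0, 1, 0, 1, 2, 0, 0, by unfold conds'; omega⟩
          · exfalso; omega
        · rcases hl2 with rfl|rfl|rfl|rfl
          · exact ⟨0, 0, 1, 1, 0, 0, 1, 1, 0, 0, 0, 0, 1, 1, 0, by unfold conds'; omega⟩
          · exact ⟨0, 0, 0, 1, 1, 0, 1, 1, 0, 0, 0, 0, 2, 1, 0, by unfold conds'; omega⟩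
          · exact ⟨0, 0, 0, 1, 1, 0, 0, 1, 1, 1, 0, 1, 2, 0, 0, by unfold conds'; omega⟩
          · exfalso; omega
        · rcases hl2 with rfl|rfl|rfl|rfl
          · exact ⟨0, 0, 0, 2, 0, 0, 1, 1, 0, 0, 0, 0, 2, 1, 0, by unfold conds'; omega⟩
          · exact ⟨0, 0, 0, 2, 0, 0, 1, 1, 0, 1, 0, 0, 2, 1, 0, by unfold conds'; omega⟩
          · exact ⟨0, 0, 0, 2, 1, 0, 0, 1, 1, 1, 0, 1, 2, 0, 0, by unfold conds'; omega⟩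
          · exfalso; omega
        · rcases hl2 with rfl|rfl|rfl|rfl
          · exfalso; omega
          · exfalso; omega
          · exfalso; omega
          · exfalso; omega
      · rcases hl1 with rfl|rfl|rfl|rfl
        · rcases hl2 with rfl|rfl|rfl|rfl
          · exact ⟨0, 1, 0, 1, 0, 0, 0, 2, 0, 0, 0, 0, 2, 0, 0, by unfold conds'; omega⟩
          · exact ⟨0, 1, 0, 1, 0, 0, 0, 1, 0, 1, 0, 0, 3, 0, 0, by unfold conds'; omega⟩
          · exact ⟨0, 0, 0, 1, 1, 0, 0, 2, 0, 1, 0, 1, 2, 0, 0, by unfold conds'; omega⟩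
          · exfalso; omega
        · rcases hl2 with rfl|rfl|rfl|rfl
          · exact ⟨0, 0, 1, 1, 0, 0, 1, 1, 0, 0, 0, 0, 2, 1, 0, by unfold conds'; omega⟩
          · exact ⟨0, 0, 0, 1, 1, 0, 1, 2, 0, 0, 0, 0, 2, 1, 0, by unfold conds'; omega⟩
          · exact ⟨0, 0, 0, 2, 1, 0, 0, 2, 0, 1, 0, 1, 2, 0, 0, by unfold conds'; omega⟩
          · exfalso; omega
        · rcases hl2 with rfl|rfl|rfl|rfl
          · exact ⟨0, 0, 0, 2, 0, 0, 1, 2, 0, 0, 0, 0, 2, 1, 0, by unfold conds'; omega⟩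
          · exact ⟨0, 0, 0, 2, 1, 0, 1, 2, 0, 0, 0, 0, 2, 1, 0, by unfold conds'; omega⟩
          · exact ⟨0, 0, 0, 2, 1, 0, 0, 1, 1, 1, 0, 1, 3, 0, 0, by unfold conds'; omega⟩
          · exfalso; omega
        · rcases hl2 with rfl|rfl|rfl|rfl
          · exfalso; omega
          · exfalso; omega
          · exfalso; omega
          · exfalso; omega
      · rcases hl1 with rfl|rfl|rfl|rfl
        · rcases hl2 with rfl|rfl|rfl|rfl
          · exfalso; omega
          · exfalso; omega
          · exfalso; omega
          · exfalso; omega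
        · rcases hl2 with rfl|rfl|rfl|rfl
          · exfalso; omega
          · exfalso; omega
          · exfalso; omega
          · exfalso; omega
        · rcases hl2 with rfl|rfl|rfl|rfl
          · exfalso; omega
          · exfalso; omega
          · exfalso; omega
          · exfalso; omega
        · rcases hl2 with rfl|rfl|rfl|rfl
          · exfalso; omega
          · exfalso; omega
          · exfalso; omega
          · exfalso; omega
      · rcases hl1 with rfl|rfl|rfl|rfl
        · rcases hl2 with rfl|rfl|rfl|rfl
          · exfalso; omega
          · exfalso; omega
          · exfalso; omega
          · exfalso; omega
        · rcases hl2 with rfl|rfl|rfl|rfl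
          · exfalso; omega
          · exfalso; omega
          · exfalso; omega
          · exfalso; omega
        · rcases hl2 with rfl|rfl|rfl|rfl
          · exfalso; omega
          · exfalso; omega
          · exfalso; omega
          · exfalso; omega
        · rcases hl2 with rfl|rfl|rfl|rfl
          · exfalso; omega
          · exfalso; omega
          · exfalso; omega
          · exfalso; omega
    · rcases hl0 with rfl|rfl|rfl|rfl|rfl
      · rcases hl1 with rfl|rfl|rfl|rfl
        · rcases hl2 with rfl|rfl|rfl|rfl
          · exact ⟨0, 1, 0, 0, 0, 0, 1, 1, 0, 0, 0, 0, 1, 1, 0, by unfold conds'; omega⟩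
          · exact ⟨0, 0, 0, 1, 1, 0, 1, 1, 0, 0, 0, 1, 1, 0, 0, by unfold conds'; omega⟩
          · exact ⟨0, 0, 0, 1, 1, 0, 1, 0, 0, 1, 0, 1, 2, 0, 0, by unfold conds'; omega⟩
          · exfalso; omega
        · rcases hl2 with rfl|rfl|rfl|rfl
          · exact ⟨0, 1, 0, 1, 0, 0, 1, 1, 0, 0, 0, 0, 1, 1, 0, by unfold conds'; omega⟩
          · exact ⟨0, 0, 0, 1, 1, 0, 1, 1, 0, 0, 0, 1, 1, 1, 0, by unfold conds'; omega⟩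
          · exact ⟨0, 0, 0, 2, 1, 0, 1, 0, 0, 1, 0, 1, 2, 0, 0, by unfold conds'; omega⟩
          · exfalso; omega
        · rcases hl2 with rfl|rfl|rfl|rfl
          · exact ⟨0, 1, 0, 1, 0, 0, 1, 1, 0, 0, 0, 0, 1, 2, 0, by unfold conds'; omega⟩
          · exact ⟨0, 0, 0, 2, 1, 0, 1, 1, 0, 0, 0, 1, 1, 1, 0, by unfold conds'; omega⟩
          · exact ⟨0, 0, 0, 2, 1, 0, 1, 1, 0, 1, 0, 1, 1, 1, 0, by unfold conds'; omega⟩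
          · exfalso; omega
        · rcases hl2 with rfl|rfl|rfl|rfl
          · exfalso; omega
          · exfalso; omega
          · exfalso; omega
          · exfalso; omega
      · rcases hl1 with rfl|rfl|rfl|rfl
        · rcases hl2 with rfl|rfl|rfl|rfl
          · exfalso; omega
          · exact ⟨0, 0, 0, 1, 1, 0, 1, 1, 0, 0, 0, 1, 2, 0, 0, by unfold conds'; omega⟩
          · exact ⟨0, 0, 0, 1, 1, 0, 1, 1, 0, 1, 0, 1, 2, 0, 0, by unfold conds'; omega⟩
          · exact ⟨0, 0, 0, 1, 2, 0, 1, 1, 0, 1, 0, 1, 2, 0, 0, by unfold conds'; omega⟩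
        · rcases hl2 with rfl|rfl|rfl|rfl
          · exact ⟨0, 1, 0, 1, 0, 0, 1, 1, 0, 0, 0, 0, 2, 1, 0, by unfold conds'; omega⟩
          · exact ⟨0, 0, 0, 2, 1, 0, 1, 1, 0, 0, 0, 1, 2, 0, 0, by unfold conds'; omega⟩
          · exact ⟨0, 0, 0, 2, 1, 0, 1, 1, 0, 1, 0, 1, 2, 0, 0, by unfold conds'; omega⟩
          · exfalso; omega
        · rcases hl2 with rfl|rfl|rfl|rfl
          · exact ⟨0, 1, 0, 2, 0, 0, 1, 1, 0, 0, 0, 0, 2, 1, 0, by unfold conds'; omega⟩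
          · exact ⟨0, 0, 0, 2, 1, 0, 1, 2, 0, 0, 0, 1, 1, 1, 0, by unfold conds'; omega⟩
          · exact ⟨0, 0, 0, 2, 1, 0, 1, 1, 0, 1, 0, 1, 2, 1, 0, by unfold conds'; omega⟩
          · exfalso; omega
        · rcases hl2 with rfl|rfl|rfl|rfl
          · exact ⟨0, 0, 1, 2, 0, 0, 2, 1, 0, 0, 0, 0, 1, 2, 0, by unfold conds'; omega⟩
          · exfalso; omega
          · exfalso; omega
          · exfalso; omega
      · rcases hl1 with rfl|rfl|rfl|rfl
        · rcases hl2 with rfl|rfl|rfl|rfl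
          · exact ⟨0, 1, 1, 0, 0, 0, 1, 1, 0, 0, 0, 0, 2, 1, 0, by unfold conds'; omega⟩
          · exact ⟨0, 0, 0, 1, 1, 0, 1, 2, 0, 0, 0, 1, 2, 0, 0, by unfold conds'; omega⟩
          · exact ⟨0, 0, 0, 1, 2, 0, 1, 2, 0, 0, 0, 1, 2, 0, 0, by unfold conds'; omega⟩
          · exfalso; omega
        · rcases hl2 with rfl|rfl|rfl|rfl
          · exact ⟨0, 1, 0, 1, 0, 0, 1, 2, 0, 0, 0, 0, 2, 1, 0, by unfold conds'; omega⟩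
          · exact ⟨0, 0, 0, 2, 1, 0, 1, 2, 0, 0, 0, 1, 2, 0, 0, by unfold conds'; omega⟩
          · exact ⟨0, 0, 0, 2, 1, 0, 1, 1, 0, 1, 0, 1, 3, 0, 0, by unfold conds'; omega⟩
          · exfalso; omega
        · rcases hl2 with rfl|rfl|rfl|rfl
          · exact ⟨0, 1, 0, 2, 0, 0, 1, 2, 0, 0, 0, 0, 2, 1, 0, by unfold conds'; omega⟩
          · exact ⟨0, 0, 0, 2, 1, 0, 1, 2, 0, 0, 0, 1, 2, 1, 0, by unfold conds'; omega⟩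
          · exact ⟨0, 0, 0, 3, 1, 0, 1, 1, 0, 1, 0, 1, 3, 0, 0, by unfold conds'; omega⟩
          · exfalso; omega
        · rcases hl2 with rfl|rfl|rfl|rfl
          · exfalso; omega
          · exfalso; omega
          · exfalso; omega
          · exfalso; omega
      · rcases hl1 with rfl|rfl|rfl|rfl
        · rcases hl2 with rfl|rfl|rfl|rfl
          · exfalso; omega
          · exfalso; omega
          · exfalso; omega
          · exfalso; omega
        · rcases hl2 with rfl|rfl|rfl|rfl
          · exfalso; omega
          · exfalso; omega
          · exfalso; omega
          · exfalso; omega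
        · rcases hl2 with rfl|rfl|rfl|rfl
          · exfalso; omega
          · exfalso; omega
          · exfalso; omega
          · exfalso; omega
        · rcases hl2 with rfl|rfl|rfl|rfl
          · exfalso; omega
          · exfalso; omega
          · exfalso; omega
          · exfalso; omega
      · rcases hl1 with rfl|rfl|rfl|rfl
        · rcases hl2 with rfl|rfl|rfl|rfl
          · exact ⟨0, 2, 0, 1, 0, 0, 0, 3, 0, 0, 0, 0, 3, 0, 0, by unfold conds'; omega⟩
          · exfalso; omega
          · exfalso; omega
          · exfalso; omega
        · rcases hl2 with rfl|rfl|rfl|rfl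
          · exfalso; omega
          · exfalso; omega
          · exfalso; omega
          · exfalso; omega
        · rcases hl2 with rfl|rfl|rfl|rfl
          · exfalso; omega
          · exfalso; omega
          · exfalso; omega
          · exfalso; omega
        · rcases hl2 with rfl|rfl|rfl|rfl
          · exfalso; omega
          · exfalso; omega
          · exfalso; omega
          · exfalso; omega

theorem badfam0 (k : ℕ) : EX 0 (2+3*k) 3 1 0 := by
  induction k with
  | zero => exact ⟨0,1,1,0,0, 0,1,1,0,0, 0,0,1,1,0, by unfold conds; omega⟩
  | succ n ih =>
    have h' := addB ih
    have e : 2 + 3 * n + 3 = 2 + 3 * (n+1) := by omega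
    rwa [e] at h'

theorem badfam1 (k : ℕ) : EX' 1 (2+3*k) 3 1 0 := by
  induction k with
  | zero => exact ⟨1,1,0,0,0, 0,1,1,0,0, 0,0,2,1,0, by unfold conds'; omega⟩
  | succ n ih =>
    have h' := addB' ih
    have e : 2 + 3 * n + 3 = 2 + 3 * (n+1) := by omega
    rwa [e] at h'

theorem arith (s b l0 l1 l2 : ℕ) (h2 : 2 ≤ l0) (h1 : 1 ≤ l1) : EX s b l0 l1 l2 := by
  by_cases hbad : b % 3 = 2 ∧ l0 = 3 ∧ l1 = 1 ∧ l2 = 0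
  · obtain ⟨hb, rfl, rfl, rfl⟩ := hbad
    have eb : 2 + 3 * ((b-2)/3) = b := by omega
    rcases Nat.eq_zero_or_pos s with rfl | hs
    · have := badfam0 ((b-2)/3); rwa [eb] at this
    · have h' := padN'' (badfam1 ((b-2)/3)) (s-1)
      have e : s - 1 + 1 = s := by omega
      rw [e, eb] at h'
      exact EX'_imp h'
  · exact EX'_imp (padN' (core (b+l0+l1+l2) b l0 l1 l2 le_rfl h2 h1 hbad) s)


theorem split3 {ι : Type*} [DecidableEq ι] (C : Finset ι) (a0 a1 a2 : ℕ)
    (h : a0 + a1 + a2 = C.card) :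
    ∃ C0 C1 C2 : Finset ι, C0 ∪ C1 ∪ C2 = C ∧ Disjoint C0 C1 ∧ Disjoint C0 C2 ∧
      Disjoint C1 C2 ∧ C0.card = a0 ∧ C1.card = a1 ∧ C2.card = a2 ∧
      C0 ⊆ C ∧ C1 ⊆ C ∧ C2 ⊆ C := by
  obtain ⟨C0, hC0, hc0⟩ := Finset.exists_subset_card_eq (show a0 ≤ C.card by omega)
  have hD : (C \ C0).card = a1 + a2 := by
    rw [Finset.card_sdiff_of_subset hC0]; omega
  obtain ⟨C1, hC1, hc1⟩ := Finset.exists_subset_card_eq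
    (show a1 ≤ (C \ C0).card by omega)
  refine ⟨C0, C1, (C \ C0) \ C1, ?_, ?_, ?_, ?_, hc0, hc1, ?_, hC0, ?_, ?_⟩
  · rw [Finset.union_assoc, Finset.union_sdiff_of_subset hC1,
      Finset.union_sdiff_of_subset hC0]
  · exact (Finset.disjoint_sdiff).mono_right hC1
  · exact (Finset.disjoint_sdiff).mono_right (Finset.sdiff_subset)
  · exact Finset.disjoint_sdiff
  · rw [Finset.card_sdiff_of_subset hC1, hD, hc1]; omega
  · exact hC1.trans Finset.sdiff_subset
  · exact Finset.sdiff_subset.trans Finset.sdiff_subset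

theorem key_real (ε : ℝ) (hε0 : 0 ≤ ε) (hε1 : ε ≤ 1) (na ma nb mb : ℕ)
    (hA : na ≤ nb) (hB : na + ma ≤ nb + mb + 1) (x : ℝ) (hx : ε ≤ x) :
    (na : ℝ) + ε * ma - x ≤ nb + ε * mb := by
  have h1 : (na : ℝ) ≤ nb := by exact_mod_cast hA
  have h2 : (na : ℝ) + ma ≤ nb + mb + 1 := by exact_mod_cast hB
  nlinarith [mul_nonneg (sub_nonneg.mpr hε1) (sub_nonneg.mpr h1),
    mul_nonneg hε0 (by linarith : (0:ℝ) ≤ (nb:ℝ) + mb + 1 - na - ma)]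

theorem sum5v {ι : Type*} [DecidableEq ι] {A B C D E CA CB CC CD CE : Finset ι}
    {f : ι → ℝ} {vA vB vC vD vE : ℝ}
    (dAB : Disjoint A B) (dAC : Disjoint A C) (dAD : Disjoint A D) (dAE : Disjoint A E)
    (dBC : Disjoint B C) (dBD : Disjoint B D) (dBE : Disjoint B E)
    (dCD : Disjoint C D) (dCE : Disjoint C E) (dDE : Disjoint D E)
    (sA : A ⊆ CA) (sB : B ⊆ CB) (sC : C ⊆ CC) (sD : D ⊆ CD) (sE : E ⊆ CE)
    (hvA : ∀ e ∈ CA, f e = vA) (hvB : ∀ e ∈ CB, f e = vB) (hvC : ∀ e ∈ CC, f e = vC)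
    (hvD : ∀ e ∈ CD, f e = vD) (hvE : ∀ e ∈ CE, f e = vE) :
    ∑ x ∈ A ∪ B ∪ C ∪ D ∪ E, f x =
      A.card * vA + B.card * vB + C.card * vC + D.card * vD + E.card * vE := by
  have cst : ∀ (P Q : Finset ι) (v : ℝ), P ⊆ Q → (∀ e ∈ Q, f e = v) →
      ∑ x ∈ P, f x = P.card * v := by
    intro P Q v hPQ hv
    rw [Finset.sum_congr rfl (fun x hx => hv x (hPQ hx)), Finset.sum_const,
      nsmul_eq_mul]
  rw [Finset.sum_union (by
      refine Finset.disjoint_union_left.mpr ⟨?_, dDE⟩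
      refine Finset.disjoint_union_left.mpr ⟨?_, dCE⟩
      exact Finset.disjoint_union_left.mpr ⟨dAE, dBE⟩),
    Finset.sum_union (by
      refine Finset.disjoint_union_left.mpr ⟨?_, dCD⟩
      exact Finset.disjoint_union_left.mpr ⟨dAD, dBD⟩),
    Finset.sum_union (Finset.disjoint_union_left.mpr ⟨dAC, dBC⟩),
    Finset.sum_union dAB,
    cst A CA vA sA hvA, cst B CB vB sB hvB, cst C CC vC sC hvC,
    cst D CD vD sD hvD, cst E CE vE sE hvE]

theorem aux {ι : Type*} [DecidableEq ι] (M SS BBs LL0 LL1 LL2 : Finset ι)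
    (c : Fin 3 → ι → ℝ) (ε : ℝ) (hε0 : 0 ≤ ε) (hε1 : ε < 1)
    (hdSB : Disjoint SS BBs) (hdS0 : Disjoint SS LL0) (hdS1 : Disjoint SS LL1)
    (hdS2 : Disjoint SS LL2) (hdB0 : Disjoint BBs LL0) (hdB1 : Disjoint BBs LL1)
    (hdB2 : Disjoint BBs LL2) (hd01 : Disjoint LL0 LL1) (hd02 : Disjoint LL0 LL2)
    (hd12 : Disjoint LL1 LL2)
    (hunion : SS ∪ BBs ∪ LL0 ∪ LL1 ∪ LL2 = M)
    (hS : ∀ x ∈ SS, ∀ j : Fin 3, c j x = ε)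
    (hB : ∀ x ∈ BBs, ∀ j : Fin 3, c j x = 1)
    (hL0 : ∀ x ∈ LL0, c 0 x = 1 ∧ c 1 x = ε ∧ c 2 x = ε)
    (hL1 : ∀ x ∈ LL1, c 0 x = ε ∧ c 1 x = 1 ∧ c 2 x = ε)
    (hL2 : ∀ x ∈ LL2, c 0 x = ε ∧ c 1 x = ε ∧ c 2 x = 1)
    (hc0 : 2 ≤ LL0.card) (hc1 : 1 ≤ LL1.card) :
    ∃ X : Fin 3 → Finset ι,
      (∀ i j, i ≠ j → Disjoint (X i) (X j)) ∧
      (Finset.univ.biUnion X = M) ∧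
      (∀ i j : Fin 3, ∀ e ∈ X i,
        ∑ f ∈ (X i).erase e, c i f ≤ ∑ f ∈ X j, c i f) := by
  have hi3 : ∀ k : Fin 3, k = 0 ∨ k = 1 ∨ k = 2 := by decide
  have hMbi : ∀ x ∈ M, ∀ a : Fin 3, c a x = ε ∨ c a x = 1 := by
    intro x hx a
    rw [← hunion] at hx
    simp only [Finset.mem_union] at hx
    rcases hx with ((((h|h)|h)|h)|h)
    · exact Or.inl (hS x h a)
    · exact Or.inr (hB x h a)
    · rcases hi3 a with rfl|rfl|rfl
      exacts [Or.inr (hL0 x h).1, Or.inl (hL0 x h).2.1, Or.inl (hL0 x h).2.2]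
    · rcases hi3 a with rfl|rfl|rfl
      exacts [Or.inl (hL1 x h).1, Or.inr (hL1 x h).2.1, Or.inl (hL1 x h).2.2]
    · rcases hi3 a with rfl|rfl|rfl
      exacts [Or.inl (hL2 x h).1, Or.inl (hL2 x h).2.1, Or.inr (hL2 x h).2.2]
  have hnn : ∀ x ∈ M, ∀ a : Fin 3, 0 ≤ c a x := by
    intro x hx a
    rcases hMbi x hx a with h|h
    · rw [h]; exact hε0
    · rw [h]; norm_num
  obtain ⟨sa,ba,p0,q0,r0,sb,bb,p1,q1,r1,sc,bc,p2,q2,r2,hcd⟩ :=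
    arith SS.card BBs.card LL0.card LL1.card LL2.card hc0 hc1
  unfold conds at hcd
  obtain ⟨hcs,hcb,hcp,hcq,hcr,hr01,hr10,hr02,hr20,hr12,hr21,hm01,hm02,hm10,hm12,hm20,hm21⟩ := hcd
  obtain ⟨S0,S1,S2,uS,dS01,dS02,dS12,cS0,cS1,cS2,sS0,sS1,sS2⟩ := split3 SS sa sb sc hcs
  obtain ⟨B0,B1,B2,uB,dB01,dB02,dB12,cB0,cB1,cB2,sB0,sB1,sB2⟩ := split3 BBs ba bb bc hcb
  obtain ⟨P0,P1,P2,uP,dP01,dP02,dP12,cP0,cP1,cP2,sP0,sP1,sP2⟩ := split3 LL0 p0 p1 p2 hcp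
  obtain ⟨Q0,Q1,Q2,uQ,dQ01,dQ02,dQ12,cQ0,cQ1,cQ2,sQ0,sQ1,sQ2⟩ := split3 LL1 q0 q1 q2 hcq
  obtain ⟨R0,R1,R2,uR,dR01,dR02,dR12,cR0,cR1,cR2,sR0,sR1,sR2⟩ := split3 LL2 r0 r1 r2 hcr
  have DAB : Disjoint (S0 ∪ B0 ∪ P0 ∪ Q0 ∪ R0) (S1 ∪ B1 ∪ P1 ∪ Q1 ∪ R1) := by
    exact Finset.disjoint_union_left.mpr ⟨Finset.disjoint_union_left.mpr ⟨Finset.disjoint_union_left.mpr ⟨Finset.disjoint_union_left.mpr ⟨Finset.disjoint_union_right.mpr ⟨Finset.disjoint_union_right.mpr ⟨Finset.disjoint_union_right.mpr ⟨Finset.disjoint_union_right.mpr ⟨dS01, (hdSB.mono sS0 sB1)⟩, (hdS0.mono sS0 sP1)⟩, (hdS1.mono sS0 sQ1)⟩, (hdS2.mono sS0 sR1)⟩, Finset.disjoint_union_right.mpr ⟨Finset.disjoint_union_right.mpr ⟨Finset.disjoint_union_right.mpr ⟨Finset.disjoint_union_right.mpr ⟨(hdSB.symm.mono sB0 sS1),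 dB01⟩, (hdB0.mono sB0 sP1)⟩, (hdB1.mono sB0 sQ1)⟩, (hdB2.mono sB0 sR1)⟩⟩, Finset.disjoint_union_right.mpr ⟨Finset.disjoint_union_right.mpr ⟨Finset.disjoint_union_right.mpr ⟨Finset.disjoint_union_right.mpr ⟨(hdS0.symm.mono sP0 sS1), (hdB0.symm.mono sP0 sB1)⟩, dP01⟩, (hd01.mono sP0 sQ1)⟩, (hd02.mono sP0 sR1)⟩⟩, Finset.disjoint_union_right.mpr ⟨Finset.disjoint_union_right.mpr ⟨Finset.disjoint_union_right.mpr ⟨Finset.disjoint_union_right.mpr ⟨(hdS1.symm.mono sQ0 sS1), (hdB1.symm.mono sQ0 sB1)⟩, (hd01.symm.mono sQ0 sP1)⟩, dQ01⟩, (hd12.mono sQ0 sR1)⟩⟩, Finset.disjoint_union_right.mpr ⟨Finset.disjoint_union_right.mpr ⟨Finset.disjoint_union_right.mpr ⟨Finset.disjoint_union_right.mpr ⟨(hdS2.symm.mono sR0 sS1), (hdB2.symm.mono sR0 sB1)⟩, (hd02.symm.mono sR0 sP1)⟩, (hd12.symm.mono sR0 sQ1)⟩, dR01⟩⟩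
  have DAC : Disjoint (S0 ∪ B0 ∪ P0 ∪ Q0 ∪ R0) (S2 ∪ B2 ∪ P2 ∪ Q2 ∪ R2) := by
    exact Finset.disjoint_union_left.mpr ⟨Finset.disjoint_union_left.mpr ⟨Finset.disjoint_union_left.mpr ⟨Finset.disjoint_union_left.mpr ⟨Finset.disjoint_union_right.mpr ⟨Finset.disjoint_union_right.mpr ⟨Finset.disjoint_union_right.mpr ⟨Finset.disjoint_union_right.mpr ⟨dS02, (hdSB.mono sS0 sB2)⟩, (hdS0.mono sS0 sP2)⟩, (hdS1.mono sS0 sQ2)⟩, (hdS2.mono sS0 sR2)⟩, Finset.disjoint_union_right.mpr ⟨Finset.disjoint_union_right.mpr ⟨Finset.disjoint_union_right.mpr ⟨Finset.disjoint_union_right.mpr ⟨(hdSB.symm.mono sB0 sS2), dB02⟩, (hdB0.mono sB0 sP2)⟩, (hdB1.mono sB0 sQ2)⟩, (hdB2.mono sB0 sR2)⟩⟩, Finset.disjoint_union_right.mpr ⟨Finset.disjoint_union_right.mpr ⟨Finset.disjoint_union_right.mpr ⟨Finset.disjoint_union_right.mpr ⟨(hdS0.symm.mono sP0 sS2), (hdB0.symm.mono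 sP0 sB2)⟩, dP02⟩, (hd01.mono sP0 sQ2)⟩, (hd02.mono sP0 sR2)⟩⟩, Finset.disjoint_union_right.mpr ⟨Finset.disjoint_union_right.mpr ⟨Finset.disjoint_union_right.mpr ⟨Finset.disjoint_union_right.mpr ⟨(hdS1.symm.mono sQ0 sS2), (hdB1.symm.mono sQ0 sB2)⟩, (hd01.symm.mono sQ0 sP2)⟩, dQ02⟩, (hd12.mono sQ0 sR2)⟩⟩, Finset.disjoint_union_right.mpr ⟨Finset.disjoint_union_right.mpr ⟨Finset.disjoint_union_right.mpr ⟨Finset.disjoint_union_right.mpr ⟨(hdS2.symm.mono sR0 sS2), (hdB2.symm.mono sR0 sB2)⟩, (hd02.symm.mono sR0 sP2)⟩, (hd12.symm.mono sR0 sQ2)⟩, dR02⟩⟩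
  have DBC : Disjoint (S1 ∪ B1 ∪ P1 ∪ Q1 ∪ R1) (S2 ∪ B2 ∪ P2 ∪ Q2 ∪ R2) := by
    exact Finset.disjoint_union_left.mpr ⟨Finset.disjoint_union_left.mpr ⟨Finset.disjoint_union_left.mpr ⟨Finset.disjoint_union_left.mpr ⟨Finset.disjoint_union_right.mpr ⟨Finset.disjoint_union_right.mpr ⟨Finset.disjoint_union_right.mpr ⟨Finset.disjoint_union_right.mpr ⟨dS12, (hdSB.mono sS1 sB2)⟩, (hdS0.mono sS1 sP2)⟩, (hdS1.mono sS1 sQ2)⟩, (hdS2.mono sS1 sR2)⟩, Finset.disjoint_union_right.mpr ⟨Finset.disjoint_union_right.mpr ⟨Finset.disjoint_union_right.mpr ⟨Finset.disjoint_union_right.mpr ⟨(hdSB.symm.mono sB1 sS2), dB12⟩, (hdB0.mono sB1 sP2)⟩, (hdB1.mono sB1 sQ2)⟩, (hdB2.mono sB1 sR2)⟩⟩, Finset.disjoint_union_right.mpr ⟨Finset.disjoint_union_right.mpr ⟨Finset.disjoint_union_right.mpr ⟨Finset.disjoint_union_right.mpr ⟨(hdS0.symm.mono sP1 sS2), (hdB0.symm.mono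 sP1 sB2)⟩, dP12⟩, (hd01.mono sP1 sQ2)⟩, (hd02.mono sP1 sR2)⟩⟩, Finset.disjoint_union_right.mpr ⟨Finset.disjoint_union_right.mpr ⟨Finset.disjoint_union_right.mpr ⟨Finset.disjoint_union_right.mpr ⟨(hdS1.symm.mono sQ1 sS2), (hdB1.symm.mono sQ1 sB2)⟩, (hd01.symm.mono sQ1 sP2)⟩, dQ12⟩, (hd12.mono sQ1 sR2)⟩⟩, Finset.disjoint_union_right.mpr ⟨Finset.disjoint_union_right.mpr ⟨Finset.disjoint_union_right.mpr ⟨Finset.disjoint_union_right.mpr ⟨(hdS2.symm.mono sR1 sS2), (hdB2.symm.mono sR1 sB2)⟩, (hd02.symm.mono sR1 sP2)⟩, (hd12.symm.mono sR1 sQ2)⟩, dR12⟩⟩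
  have sXM0 : (S0 ∪ B0 ∪ P0 ∪ Q0 ∪ R0) ⊆ M := by
    intro x hx
    rw [← hunion]
    simp only [Finset.mem_union] at hx ⊢
    rcases hx with ((((h|h)|h)|h)|h)
    · exact Or.inl (Or.inl (Or.inl (Or.inl (sS0 h))))
    · exact Or.inl (Or.inl (Or.inl (Or.inr (sB0 h))))
    · exact Or.inl (Or.inl (Or.inr (sP0 h)))
    · exact Or.inl (Or.inr (sQ0 h))
    · exact Or.inr (sR0 h)
  have sXM1 : (S1 ∪ B1 ∪ P1 ∪ Q1 ∪ R1) ⊆ M := by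
    intro x hx
    rw [← hunion]
    simp only [Finset.mem_union] at hx ⊢
    rcases hx with ((((h|h)|h)|h)|h)
    · exact Or.inl (Or.inl (Or.inl (Or.inl (sS1 h))))
    · exact Or.inl (Or.inl (Or.inl (Or.inr (sB1 h))))
    · exact Or.inl (Or.inl (Or.inr (sP1 h)))
    · exact Or.inl (Or.inr (sQ1 h))
    · exact Or.inr (sR1 h)
  have sXM2 : (S2 ∪ B2 ∪ P2 ∪ Q2 ∪ R2) ⊆ M := by
    intro x hx
    rw [← hunion]
    simp only [Finset.mem_union] at hx ⊢
    rcases hx with ((((h|h)|h)|h)|h)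
    · exact Or.inl (Or.inl (Or.inl (Or.inl (sS2 h))))
    · exact Or.inl (Or.inl (Or.inl (Or.inr (sB2 h))))
    · exact Or.inl (Or.inl (Or.inr (sP2 h)))
    · exact Or.inl (Or.inr (sQ2 h))
    · exact Or.inr (sR2 h)
  have hXU : (S0 ∪ B0 ∪ P0 ∪ Q0 ∪ R0) ∪ (S1 ∪ B1 ∪ P1 ∪ Q1 ∪ R1) ∪ (S2 ∪ B2 ∪ P2 ∪ Q2 ∪ R2) = M := by
    refine Finset.Subset.antisymm (Finset.union_subset (Finset.union_subset sXM0 sXM1) sXM2) ?_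
    intro a ha
    have hm : a ∈ SS ∪ BBs ∪ LL0 ∪ LL1 ∪ LL2 := hunion ▸ ha
    rw [← uS, ← uB, ← uP, ← uQ, ← uR] at hm
    simp only [Finset.mem_union] at hm ⊢
    rcases hm with (((( ((h|h)|h) | ((h|h)|h) ) | ((h|h)|h)) | ((h|h)|h)) | ((h|h)|h))
    · exact Or.inl (Or.inl (Or.inl (Or.inl (Or.inl (Or.inl h)))))
    · exact Or.inl (Or.inr (Or.inl (Or.inl (Or.inl (Or.inl h)))))
    · exact Or.inr (Or.inl (Or.inl (Or.inl (Or.inl h))))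
    · exact Or.inl (Or.inl (Or.inl (Or.inl (Or.inl (Or.inr h)))))
    · exact Or.inl (Or.inr (Or.inl (Or.inl (Or.inl (Or.inr h)))))
    · exact Or.inr (Or.inl (Or.inl (Or.inl (Or.inr h))))
    · exact Or.inl (Or.inl (Or.inl (Or.inl (Or.inr h))))
    · exact Or.inl (Or.inr (Or.inl (Or.inl (Or.inr h))))
    · exact Or.inr (Or.inl (Or.inl (Or.inr h)))
    · exact Or.inl (Or.inl (Or.inl (Or.inr h)))
    · exact Or.inl (Or.inr (Or.inl (Or.inr h)))
    · exact Or.inr (Or.inl (Or.inr h))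
    · exact Or.inl (Or.inl (Or.inr h))
    · exact Or.inl (Or.inr (Or.inr h))
    · exact Or.inr (Or.inr h)
  have E00 : ∑ x ∈ S0 ∪ B0 ∪ P0 ∪ Q0 ∪ R0, c 0 x = (sa : ℝ) * ε + (ba : ℝ) * (1:ℝ) + (p0 : ℝ) * (1:ℝ) + (q0 : ℝ) * ε + (r0 : ℝ) * ε := by
    have h := sum5v (f := c 0) (hdSB.mono sS0 sB0) (hdS0.mono sS0 sP0) (hdS1.mono sS0 sQ0) (hdS2.mono sS0 sR0) (hdB0.mono sB0 sP0) (hdB1.mono sB0 sQ0) (hdB2.mono sB0 sR0) (hd01.mono sP0 sQ0) (hd02.mono sP0 sR0) (hd12.mono sQ0 sR0) sS0 sB0 sP0 sQ0 sR0 (fun x hx => hS x hx 0) (fun x hx => hB x hx 0) (fun x hx => (hL0 x hx).1) (fun x hx => (hL1 x hx).1) (fun x hx => (hL2 x hx).1)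
    rw [cS0, cB0, cP0, cQ0, cR0] at h
    exact h
  have E01 : ∑ x ∈ S0 ∪ B0 ∪ P0 ∪ Q0 ∪ R0, c 1 x = (sa : ℝ) * ε + (ba : ℝ) * (1:ℝ) + (p0 : ℝ) * ε + (q0 : ℝ) * (1:ℝ) + (r0 : ℝ) * ε := by
    have h := sum5v (f := c 1) (hdSB.mono sS0 sB0) (hdS0.mono sS0 sP0) (hdS1.mono sS0 sQ0) (hdS2.mono sS0 sR0) (hdB0.mono sB0 sP0) (hdB1.mono sB0 sQ0) (hdB2.mono sB0 sR0) (hd01.mono sP0 sQ0) (hd02.mono sP0 sR0) (hd12.mono sQ0 sR0) sS0 sB0 sP0 sQ0 sR0 (fun x hx => hS x hx 1) (fun x hx => hB x hx 1) (fun x hx => (hL0 x hx).2.1) (fun x hx => (hL1 x hx).2.1) (fun x hx => (hL2 x hx).2.1)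
    rw [cS0, cB0, cP0, cQ0, cR0] at h
    exact h
  have E02 : ∑ x ∈ S0 ∪ B0 ∪ P0 ∪ Q0 ∪ R0, c 2 x = (sa : ℝ) * ε + (ba : ℝ) * (1:ℝ) + (p0 : ℝ) * ε + (q0 : ℝ) * ε + (r0 : ℝ) * (1:ℝ) := by
    have h := sum5v (f := c 2) (hdSB.mono sS0 sB0) (hdS0.mono sS0 sP0) (hdS1.mono sS0 sQ0) (hdS2.mono sS0 sR0) (hdB0.mono sB0 sP0) (hdB1.mono sB0 sQ0) (hdB2.mono sB0 sR0) (hd01.mono sP0 sQ0) (hd02.mono sP0 sR0) (hd12.mono sQ0 sR0) sS0 sB0 sP0 sQ0 sR0 (fun x hx => hS x hx 2) (fun x hx => hB x hx 2) (fun x hx => (hL0 x hx).2.2) (fun x hx => (hL1 x hx).2.2) (fun x hx => (hL2 x hx).2.2)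
    rw [cS0, cB0, cP0, cQ0, cR0] at h
    exact h
  have E10 : ∑ x ∈ S1 ∪ B1 ∪ P1 ∪ Q1 ∪ R1, c 0 x = (sb : ℝ) * ε + (bb : ℝ) * (1:ℝ) + (p1 : ℝ) * (1:ℝ) + (q1 : ℝ) * ε + (r1 : ℝ) * ε := by
    have h := sum5v (f := c 0) (hdSB.mono sS1 sB1) (hdS0.mono sS1 sP1) (hdS1.mono sS1 sQ1) (hdS2.mono sS1 sR1) (hdB0.mono sB1 sP1) (hdB1.mono sB1 sQ1) (hdB2.mono sB1 sR1) (hd01.mono sP1 sQ1) (hd02.mono sP1 sR1) (hd12.mono sQ1 sR1) sS1 sB1 sP1 sQ1 sR1 (fun x hx => hS x hx 0) (fun x hx => hB x hx 0) (fun x hx => (hL0 x hx).1) (fun x hx => (hL1 x hx).1) (fun x hx => (hL2 x hx).1)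
    rw [cS1, cB1, cP1, cQ1, cR1] at h
    exact h
  have E11 : ∑ x ∈ S1 ∪ B1 ∪ P1 ∪ Q1 ∪ R1, c 1 x = (sb : ℝ) * ε + (bb : ℝ) * (1:ℝ) + (p1 : ℝ) * ε + (q1 : ℝ) * (1:ℝ) + (r1 : ℝ) * ε := by
    have h := sum5v (f := c 1) (hdSB.mono sS1 sB1) (hdS0.mono sS1 sP1) (hdS1.mono sS1 sQ1) (hdS2.mono sS1 sR1) (hdB0.mono sB1 sP1) (hdB1.mono sB1 sQ1) (hdB2.mono sB1 sR1) (hd01.mono sP1 sQ1) (hd02.mono sP1 sR1) (hd12.mono sQ1 sR1) sS1 sB1 sP1 sQ1 sR1 (fun x hx => hS x hx 1) (fun x hx => hB x hx 1) (fun x hx => (hL0 x hx).2.1) (fun x hx => (hL1 x hx).2.1) (fun x hx => (hL2 x hx).2.1)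
    rw [cS1, cB1, cP1, cQ1, cR1] at h
    exact h
  have E12 : ∑ x ∈ S1 ∪ B1 ∪ P1 ∪ Q1 ∪ R1, c 2 x = (sb : ℝ) * ε + (bb : ℝ) * (1:ℝ) + (p1 : ℝ) * ε + (q1 : ℝ) * ε + (r1 : ℝ) * (1:ℝ) := by
    have h := sum5v (f := c 2) (hdSB.mono sS1 sB1) (hdS0.mono sS1 sP1) (hdS1.mono sS1 sQ1) (hdS2.mono sS1 sR1) (hdB0.mono sB1 sP1) (hdB1.mono sB1 sQ1) (hdB2.mono sB1 sR1) (hd01.mono sP1 sQ1) (hd02.mono sP1 sR1) (hd12.mono sQ1 sR1) sS1 sB1 sP1 sQ1 sR1 (fun x hx => hS x hx 2) (fun x hx => hB x hx 2) (fun x hx => (hL0 x hx).2.2) (fun x hx => (hL1 x hx).2.2) (fun x hx => (hL2 x hx).2.2)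
    rw [cS1, cB1, cP1, cQ1, cR1] at h
    exact h
  have E20 : ∑ x ∈ S2 ∪ B2 ∪ P2 ∪ Q2 ∪ R2, c 0 x = (sc : ℝ) * ε + (bc : ℝ) * (1:ℝ) + (p2 : ℝ) * (1:ℝ) + (q2 : ℝ) * ε + (r2 : ℝ) * ε := by
    have h := sum5v (f := c 0) (hdSB.mono sS2 sB2) (hdS0.mono sS2 sP2) (hdS1.mono sS2 sQ2) (hdS2.mono sS2 sR2) (hdB0.mono sB2 sP2) (hdB1.mono sB2 sQ2) (hdB2.mono sB2 sR2) (hd01.mono sP2 sQ2) (hd02.mono sP2 sR2) (hd12.mono sQ2 sR2) sS2 sB2 sP2 sQ2 sR2 (fun x hx => hS x hx 0) (fun x hx => hB x hx 0) (fun x hx => (hL0 x hx).1) (fun x hx => (hL1 x hx).1) (fun x hx => (hL2 x hx).1)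
    rw [cS2, cB2, cP2, cQ2, cR2] at h
    exact h
  have E21 : ∑ x ∈ S2 ∪ B2 ∪ P2 ∪ Q2 ∪ R2, c 1 x = (sc : ℝ) * ε + (bc : ℝ) * (1:ℝ) + (p2 : ℝ) * ε + (q2 : ℝ) * (1:ℝ) + (r2 : ℝ) * ε := by
    have h := sum5v (f := c 1) (hdSB.mono sS2 sB2) (hdS0.mono sS2 sP2) (hdS1.mono sS2 sQ2) (hdS2.mono sS2 sR2) (hdB0.mono sB2 sP2) (hdB1.mono sB2 sQ2) (hdB2.mono sB2 sR2) (hd01.mono sP2 sQ2) (hd02.mono sP2 sR2) (hd12.mono sQ2 sR2) sS2 sB2 sP2 sQ2 sR2 (fun x hx => hS x hx 1) (fun x hx => hB x hx 1) (fun x hx => (hL0 x hx).2.1) (fun x hx => (hL1 x hx).2.1) (fun x hx => (hL2 x hx).2.1)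
    rw [cS2, cB2, cP2, cQ2, cR2] at h
    exact h
  have E22 : ∑ x ∈ S2 ∪ B2 ∪ P2 ∪ Q2 ∪ R2, c 2 x = (sc : ℝ) * ε + (bc : ℝ) * (1:ℝ) + (p2 : ℝ) * ε + (q2 : ℝ) * ε + (r2 : ℝ) * (1:ℝ) := by
    have h := sum5v (f := c 2) (hdSB.mono sS2 sB2) (hdS0.mono sS2 sP2) (hdS1.mono sS2 sQ2) (hdS2.mono sS2 sR2) (hdB0.mono sB2 sP2) (hdB1.mono sB2 sQ2) (hdB2.mono sB2 sR2) (hd01.mono sP2 sQ2) (hd02.mono sP2 sR2) (hd12.mono sQ2 sR2) sS2 sB2 sP2 sQ2 sR2 (fun x hx => hS x hx 2) (fun x hx => hB x hx 2) (fun x hx => (hL0 x hx).2.2) (fun x hx => (hL1 x hx).2.2) (fun x hx => (hL2 x hx).2.2)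
    rw [cS2, cB2, cP2, cQ2, cR2] at h
    exact h
  refine ⟨fun i => if i = 0 then (S0 ∪ B0 ∪ P0 ∪ Q0 ∪ R0) else if i = 1 then (S1 ∪ B1 ∪ P1 ∪ Q1 ∪ R1) else (S2 ∪ B2 ∪ P2 ∪ Q2 ∪ R2), ?_, ?_, ?_⟩
  · intro i j hij
    rcases hi3 i with rfl|rfl|rfl <;> rcases hi3 j with rfl|rfl|rfl <;>
      first
      | exact absurd rfl hij
      | exact DAB | exact DAC | exact DBC
      | exact DAB.symm | exact DAC.symm | exact DBC.symm
  · ext a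
    simp only [Finset.mem_biUnion, Finset.mem_univ, true_and]
    constructor
    · rintro ⟨i, hi⟩
      rcases hi3 i with rfl|rfl|rfl
      · exact sXM0 hi
      · exact sXM1 hi
      · exact sXM2 hi
    · intro ha
      rw [← hXU] at ha
      rcases Finset.mem_union.mp ha with h | h
      · rcases Finset.mem_union.mp h with h' | h'
        · exact ⟨0, h'⟩
        · exact ⟨1, h'⟩
      · exact ⟨2, h⟩
  · intro i j e he
    rcases hi3 i with rfl|rfl|rfl <;> rcases hi3 j with rfl|rfl|rfl
    · exact Finset.sum_le_sum_of_subset_of_nonneg (Finset.erase_subset _ _)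
        (fun x hx _ => hnn x (sXM0 hx) 0)
    · -- pair (0,1)
      show ∑ f ∈ (S0 ∪ B0 ∪ P0 ∪ Q0 ∪ R0).erase e, c 0 f ≤ ∑ f ∈ S1 ∪ B1 ∪ P1 ∪ Q1 ∪ R1, c 0 f
      have he' : e ∈ S0 ∪ B0 ∪ P0 ∪ Q0 ∪ R0 := he
      have hErase : ∑ f ∈ (S0 ∪ B0 ∪ P0 ∪ Q0 ∪ R0).erase e, c 0 f + c 0 e = ∑ f ∈ S0 ∪ B0 ∪ P0 ∪ Q0 ∪ R0, c 0 f :=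
        Finset.sum_erase_add _ _ he'
      have hce : ε ≤ c 0 e := by
        rcases hMbi e (sXM0 he') 0 with h | h
        · exact le_of_eq h.symm
        · rw [h]; exact hε1.le
      rcases hm01 with hA | ⟨hz1, hz2, hz3, hA1⟩
      · have hkey := key_real ε hε0 hε1.le (ba + p0) (sa + q0 + r0) (bb + p1) (sb + q1 + r1) hA (by omega) (c 0 e) hce
        push_cast at hkey
        linarith [hErase, E00, E10, hkey]
      · have hz1' : S0 = ∅ := Finset.card_eq_zero.mp (cS0.trans hz1)
        have hz2' : Q0 = ∅ := Finset.card_eq_zero.mp (cQ0.trans hz2)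
        have hz3' : R0 = ∅ := Finset.card_eq_zero.mp (cR0.trans hz3)
        have he2 := he'
        rw [hz1', hz2', hz3'] at he2
        simp only [Finset.mem_union, Finset.notMem_empty, false_or, or_false] at he2
        have hce1 : c 0 e = 1 := by
          rcases he2 with h | h
          · exact (fun h => hB e (sB0 h) 0) h
          · exact (fun h => (hL0 e (sP0 h)).1) h
        have hA1c : (ba : ℝ) + p0 ≤ (bb : ℝ) + p1 + 1 := by exact_mod_cast hA1
        have hza : (sa : ℝ) * ε = 0 := by rw [(by exact_mod_cast hz1 : (sa : ℝ) = 0)]; ring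
        have hzb : (q0 : ℝ) * ε = 0 := by rw [(by exact_mod_cast hz2 : (q0 : ℝ) = 0)]; ring
        have hzc : (r0 : ℝ) * ε = 0 := by rw [(by exact_mod_cast hz3 : (r0 : ℝ) = 0)]; ring
        linarith [hErase, E00, E10, hA1c, hza, hzb, hzc, hce1,
          mul_nonneg (Nat.cast_nonneg sb : (0:ℝ) ≤ sb) hε0,
          mul_nonneg (Nat.cast_nonneg q1 : (0:ℝ) ≤ q1) hε0,
          mul_nonneg (Nat.cast_nonneg r1 : (0:ℝ) ≤ r1) hε0]
    · -- pair (0,2)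
      show ∑ f ∈ (S0 ∪ B0 ∪ P0 ∪ Q0 ∪ R0).erase e, c 0 f ≤ ∑ f ∈ S2 ∪ B2 ∪ P2 ∪ Q2 ∪ R2, c 0 f
      have he' : e ∈ S0 ∪ B0 ∪ P0 ∪ Q0 ∪ R0 := he
      have hErase : ∑ f ∈ (S0 ∪ B0 ∪ P0 ∪ Q0 ∪ R0).erase e, c 0 f + c 0 e = ∑ f ∈ S0 ∪ B0 ∪ P0 ∪ Q0 ∪ R0, c 0 f :=
        Finset.sum_erase_add _ _ he'
      have hce : ε ≤ c 0 e := by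
        rcases hMbi e (sXM0 he') 0 with h | h
        · exact le_of_eq h.symm
        · rw [h]; exact hε1.le
      rcases hm02 with hA | ⟨hz1, hz2, hz3, hA1⟩
      · have hkey := key_real ε hε0 hε1.le (ba + p0) (sa + q0 + r0) (bc + p2) (sc + q2 + r2) hA (by omega) (c 0 e) hce
        push_cast at hkey
        linarith [hErase, E00, E20, hkey]
      · have hz1' : S0 = ∅ := Finset.card_eq_zero.mp (cS0.trans hz1)
        have hz2' : Q0 = ∅ := Finset.card_eq_zero.mp (cQ0.trans hz2)
        have hz3' : R0 = ∅ := Finset.card_eq_zero.mp (cR0.trans hz3)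
        have he2 := he'
        rw [hz1', hz2', hz3'] at he2
        simp only [Finset.mem_union, Finset.notMem_empty, false_or, or_false] at he2
        have hce1 : c 0 e = 1 := by
          rcases he2 with h | h
          · exact (fun h => hB e (sB0 h) 0) h
          · exact (fun h => (hL0 e (sP0 h)).1) h
        have hA1c : (ba : ℝ) + p0 ≤ (bc : ℝ) + p2 + 1 := by exact_mod_cast hA1
        have hza : (sa : ℝ) * ε = 0 := by rw [(by exact_mod_cast hz1 : (sa : ℝ) = 0)]; ring
        have hzb : (q0 : ℝ) * ε = 0 := by rw [(by exact_mod_cast hz2 : (q0 : ℝ) = 0)]; ring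
        have hzc : (r0 : ℝ) * ε = 0 := by rw [(by exact_mod_cast hz3 : (r0 : ℝ) = 0)]; ring
        linarith [hErase, E00, E20, hA1c, hza, hzb, hzc, hce1,
          mul_nonneg (Nat.cast_nonneg sc : (0:ℝ) ≤ sc) hε0,
          mul_nonneg (Nat.cast_nonneg q2 : (0:ℝ) ≤ q2) hε0,
          mul_nonneg (Nat.cast_nonneg r2 : (0:ℝ) ≤ r2) hε0]
    · -- pair (1,0)
      show ∑ f ∈ (S1 ∪ B1 ∪ P1 ∪ Q1 ∪ R1).erase e, c 1 f ≤ ∑ f ∈ S0 ∪ B0 ∪ P0 ∪ Q0 ∪ R0, c 1 f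
      have he' : e ∈ S1 ∪ B1 ∪ P1 ∪ Q1 ∪ R1 := he
      have hErase : ∑ f ∈ (S1 ∪ B1 ∪ P1 ∪ Q1 ∪ R1).erase e, c 1 f + c 1 e = ∑ f ∈ S1 ∪ B1 ∪ P1 ∪ Q1 ∪ R1, c 1 f :=
        Finset.sum_erase_add _ _ he'
      have hce : ε ≤ c 1 e := by
        rcases hMbi e (sXM1 he') 1 with h | h
        · exact le_of_eq h.symm
        · rw [h]; exact hε1.le
      rcases hm10 with hA | ⟨hz1, hz2, hz3, hA1⟩
      · have hkey := key_real ε hε0 hε1.le (bb + q1) (sb + p1 + r1) (ba + q0) (sa + p0 + r0) hA (by omega) (c 1 e) hce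
        push_cast at hkey
        linarith [hErase, E11, E01, hkey]
      · have hz1' : S1 = ∅ := Finset.card_eq_zero.mp (cS1.trans hz1)
        have hz2' : P1 = ∅ := Finset.card_eq_zero.mp (cP1.trans hz2)
        have hz3' : R1 = ∅ := Finset.card_eq_zero.mp (cR1.trans hz3)
        have he2 := he'
        rw [hz1', hz2', hz3'] at he2
        simp only [Finset.mem_union, Finset.notMem_empty, false_or, or_false] at he2
        have hce1 : c 1 e = 1 := by
          rcases he2 with h | h
          · exact (fun h => hB e (sB1 h) 1) h
          · exact (fun h => (hL1 e (sQ1 h)).2.1) h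
        have hA1c : (bb : ℝ) + q1 ≤ (ba : ℝ) + q0 + 1 := by exact_mod_cast hA1
        have hza : (sb : ℝ) * ε = 0 := by rw [(by exact_mod_cast hz1 : (sb : ℝ) = 0)]; ring
        have hzb : (p1 : ℝ) * ε = 0 := by rw [(by exact_mod_cast hz2 : (p1 : ℝ) = 0)]; ring
        have hzc : (r1 : ℝ) * ε = 0 := by rw [(by exact_mod_cast hz3 : (r1 : ℝ) = 0)]; ring
        linarith [hErase, E11, E01, hA1c, hza, hzb, hzc, hce1,
          mul_nonneg (Nat.cast_nonneg sa : (0:ℝ) ≤ sa) hε0,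
          mul_nonneg (Nat.cast_nonneg p0 : (0:ℝ) ≤ p0) hε0,
          mul_nonneg (Nat.cast_nonneg r0 : (0:ℝ) ≤ r0) hε0]
    · exact Finset.sum_le_sum_of_subset_of_nonneg (Finset.erase_subset _ _)
        (fun x hx _ => hnn x (sXM1 hx) 1)
    · -- pair (1,2)
      show ∑ f ∈ (S1 ∪ B1 ∪ P1 ∪ Q1 ∪ R1).erase e, c 1 f ≤ ∑ f ∈ S2 ∪ B2 ∪ P2 ∪ Q2 ∪ R2, c 1 f
      have he' : e ∈ S1 ∪ B1 ∪ P1 ∪ Q1 ∪ R1 := he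
      have hErase : ∑ f ∈ (S1 ∪ B1 ∪ P1 ∪ Q1 ∪ R1).erase e, c 1 f + c 1 e = ∑ f ∈ S1 ∪ B1 ∪ P1 ∪ Q1 ∪ R1, c 1 f :=
        Finset.sum_erase_add _ _ he'
      have hce : ε ≤ c 1 e := by
        rcases hMbi e (sXM1 he') 1 with h | h
        · exact le_of_eq h.symm
        · rw [h]; exact hε1.le
      rcases hm12 with hA | ⟨hz1, hz2, hz3, hA1⟩
      · have hkey := key_real ε hε0 hε1.le (bb + q1) (sb + p1 + r1) (bc + q2) (sc + p2 + r2) hA (by omega) (c 1 e) hce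
        push_cast at hkey
        linarith [hErase, E11, E21, hkey]
      · have hz1' : S1 = ∅ := Finset.card_eq_zero.mp (cS1.trans hz1)
        have hz2' : P1 = ∅ := Finset.card_eq_zero.mp (cP1.trans hz2)
        have hz3' : R1 = ∅ := Finset.card_eq_zero.mp (cR1.trans hz3)
        have he2 := he'
        rw [hz1', hz2', hz3'] at he2
        simp only [Finset.mem_union, Finset.notMem_empty, false_or, or_false] at he2
        have hce1 : c 1 e = 1 := by
          rcases he2 with h | h
          · exact (fun h => hB e (sB1 h) 1) h
          · exact (fun h => (hL1 e (sQ1 h)).2.1) h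
        have hA1c : (bb : ℝ) + q1 ≤ (bc : ℝ) + q2 + 1 := by exact_mod_cast hA1
        have hza : (sb : ℝ) * ε = 0 := by rw [(by exact_mod_cast hz1 : (sb : ℝ) = 0)]; ring
        have hzb : (p1 : ℝ) * ε = 0 := by rw [(by exact_mod_cast hz2 : (p1 : ℝ) = 0)]; ring
        have hzc : (r1 : ℝ) * ε = 0 := by rw [(by exact_mod_cast hz3 : (r1 : ℝ) = 0)]; ring
        linarith [hErase, E11, E21, hA1c, hza, hzb, hzc, hce1,
          mul_nonneg (Nat.cast_nonneg sc : (0:ℝ) ≤ sc) hε0,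
          mul_nonneg (Nat.cast_nonneg p2 : (0:ℝ) ≤ p2) hε0,
          mul_nonneg (Nat.cast_nonneg r2 : (0:ℝ) ≤ r2) hε0]
    · -- pair (2,0)
      show ∑ f ∈ (S2 ∪ B2 ∪ P2 ∪ Q2 ∪ R2).erase e, c 2 f ≤ ∑ f ∈ S0 ∪ B0 ∪ P0 ∪ Q0 ∪ R0, c 2 f
      have he' : e ∈ S2 ∪ B2 ∪ P2 ∪ Q2 ∪ R2 := he
      have hErase : ∑ f ∈ (S2 ∪ B2 ∪ P2 ∪ Q2 ∪ R2).erase e, c 2 f + c 2 e = ∑ f ∈ S2 ∪ B2 ∪ P2 ∪ Q2 ∪ R2, c 2 f :=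
        Finset.sum_erase_add _ _ he'
      have hce : ε ≤ c 2 e := by
        rcases hMbi e (sXM2 he') 2 with h | h
        · exact le_of_eq h.symm
        · rw [h]; exact hε1.le
      rcases hm20 with hA | ⟨hz1, hz2, hz3, hA1⟩
      · have hkey := key_real ε hε0 hε1.le (bc + r2) (sc + p2 + q2) (ba + r0) (sa + p0 + q0) hA (by omega) (c 2 e) hce
        push_cast at hkey
        linarith [hErase, E22, E02, hkey]
      · have hz1' : S2 = ∅ := Finset.card_eq_zero.mp (cS2.trans hz1)
        have hz2' : P2 = ∅ := Finset.card_eq_zero.mp (cP2.trans hz2)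
        have hz3' : Q2 = ∅ := Finset.card_eq_zero.mp (cQ2.trans hz3)
        have he2 := he'
        rw [hz1', hz2', hz3'] at he2
        simp only [Finset.mem_union, Finset.notMem_empty, false_or, or_false] at he2
        have hce1 : c 2 e = 1 := by
          rcases he2 with h | h
          · exact (fun h => hB e (sB2 h) 2) h
          · exact (fun h => (hL2 e (sR2 h)).2.2) h
        have hA1c : (bc : ℝ) + r2 ≤ (ba : ℝ) + r0 + 1 := by exact_mod_cast hA1
        have hza : (sc : ℝ) * ε = 0 := by rw [(by exact_mod_cast hz1 : (sc : ℝ) = 0)]; ring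
        have hzb : (p2 : ℝ) * ε = 0 := by rw [(by exact_mod_cast hz2 : (p2 : ℝ) = 0)]; ring
        have hzc : (q2 : ℝ) * ε = 0 := by rw [(by exact_mod_cast hz3 : (q2 : ℝ) = 0)]; ring
        linarith [hErase, E22, E02, hA1c, hza, hzb, hzc, hce1,
          mul_nonneg (Nat.cast_nonneg sa : (0:ℝ) ≤ sa) hε0,
          mul_nonneg (Nat.cast_nonneg p0 : (0:ℝ) ≤ p0) hε0,
          mul_nonneg (Nat.cast_nonneg q0 : (0:ℝ) ≤ q0) hε0]
    · -- pair (2,1)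
      show ∑ f ∈ (S2 ∪ B2 ∪ P2 ∪ Q2 ∪ R2).erase e, c 2 f ≤ ∑ f ∈ S1 ∪ B1 ∪ P1 ∪ Q1 ∪ R1, c 2 f
      have he' : e ∈ S2 ∪ B2 ∪ P2 ∪ Q2 ∪ R2 := he
      have hErase : ∑ f ∈ (S2 ∪ B2 ∪ P2 ∪ Q2 ∪ R2).erase e, c 2 f + c 2 e = ∑ f ∈ S2 ∪ B2 ∪ P2 ∪ Q2 ∪ R2, c 2 f :=
        Finset.sum_erase_add _ _ he'
      have hce : ε ≤ c 2 e := by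
        rcases hMbi e (sXM2 he') 2 with h | h
        · exact le_of_eq h.symm
        · rw [h]; exact hε1.le
      rcases hm21 with hA | ⟨hz1, hz2, hz3, hA1⟩
      · have hkey := key_real ε hε0 hε1.le (bc + r2) (sc + p2 + q2) (bb + r1) (sb + p1 + q1) hA (by omega) (c 2 e) hce
        push_cast at hkey
        linarith [hErase, E22, E12, hkey]
      · have hz1' : S2 = ∅ := Finset.card_eq_zero.mp (cS2.trans hz1)
        have hz2' : P2 = ∅ := Finset.card_eq_zero.mp (cP2.trans hz2)
        have hz3' : Q2 = ∅ := Finset.card_eq_zero.mp (cQ2.trans hz3)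
        have he2 := he'
        rw [hz1', hz2', hz3'] at he2
        simp only [Finset.mem_union, Finset.notMem_empty, false_or, or_false] at he2
        have hce1 : c 2 e = 1 := by
          rcases he2 with h | h
          · exact (fun h => hB e (sB2 h) 2) h
          · exact (fun h => (hL2 e (sR2 h)).2.2) h
        have hA1c : (bc : ℝ) + r2 ≤ (bb : ℝ) + r1 + 1 := by exact_mod_cast hA1
        have hza : (sc : ℝ) * ε = 0 := by rw [(by exact_mod_cast hz1 : (sc : ℝ) = 0)]; ring
        have hzb : (p2 : ℝ) * ε = 0 := by rw [(by exact_mod_cast hz2 : (p2 : ℝ) = 0)]; ring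
        have hzc : (q2 : ℝ) * ε = 0 := by rw [(by exact_mod_cast hz3 : (q2 : ℝ) = 0)]; ring
        linarith [hErase, E22, E12, hA1c, hza, hzb, hzc, hce1,
          mul_nonneg (Nat.cast_nonneg sb : (0:ℝ) ≤ sb) hε0,
          mul_nonneg (Nat.cast_nonneg p1 : (0:ℝ) ≤ p1) hε0,
          mul_nonneg (Nat.cast_nonneg q1 : (0:ℝ) ≤ q1) hε0]
    · exact Finset.sum_le_sum_of_subset_of_nonneg (Finset.erase_subset _ _)
        (fun x hx _ => hnn x (sXM2 hx) 2)

/-- 3 agents with additive bi-valued cost functions taking values in `{ε, 1}` with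
`0 ≤ ε < 1`, no two agents having identical cost functions.  Suppose every
inconsistent item is large only to exactly one agent, and `L i` is the set of items
large only to agent `i`.  If `|L_i| ≥ 2` for some agent `i`, then there exists an
EFX allocation. -/
theorem stmt_15 {ι : Type*} [DecidableEq ι] (M : Finset ι)
    (c : Fin 3 → ι → ℝ) (ε : ℝ) (hε0 : 0 ≤ ε) (hε1 : ε < 1)
    (hbi : ∀ i, ∀ e ∈ M, c i e = ε ∨ c i e = 1)
    (hdiff : ∀ i j : Fin 3, i ≠ j → ∃ e ∈ M, c i e ≠ c j e)
    (hincons : ∀ e ∈ M, (∃ i j : Fin 3, c i e ≠ c j e) →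
      ∃! i : Fin 3, c i e = 1 ∧ ∀ j, j ≠ i → c j e = ε)
    (L : Fin 3 → Finset ι)
    (hL : ∀ i e, e ∈ L i ↔ e ∈ M ∧ c i e = 1 ∧ ∀ j, j ≠ i → c j e = ε)
    (hbig : ∃ i, 2 ≤ (L i).card) :
    ∃ X : Fin 3 → Finset ι,
      (∀ i j, i ≠ j → Disjoint (X i) (X j)) ∧
      (Finset.univ.biUnion X = M) ∧
      (∀ i j : Fin 3, ∀ e ∈ X i,
        ∑ f ∈ (X i).erase e, c i f ≤ ∑ f ∈ X j, c i f) := by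
  classical
  have hi3 : ∀ k : Fin 3, k = 0 ∨ k = 1 ∨ k = 2 := by decide
  have hεne : ε ≠ 1 := ne_of_lt hε1
  set SS := M.filter (fun e => ∀ j : Fin 3, c j e = ε) with hSSdef
  set BBs := M.filter (fun e => ∀ j : Fin 3, c j e = 1) with hBBdef
  have hLsub : ∀ i, L i ⊆ M := fun i e he => ((hL i e).mp he).1
  have hcover : ∀ e ∈ M, e ∈ SS ∨ e ∈ BBs ∨ e ∈ L 0 ∨ e ∈ L 1 ∨ e ∈ L 2 := by
    intro e he
    by_cases hcons : ∀ i j : Fin 3, c i e = c j e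
    · rcases hbi 0 e he with h | h
      · exact Or.inl (Finset.mem_filter.mpr ⟨he, fun j => (hcons j 0).trans h⟩)
      · exact Or.inr (Or.inl (Finset.mem_filter.mpr ⟨he, fun j => (hcons j 0).trans h⟩))
    · push_neg at hcons
      obtain ⟨i, j, hij⟩ := hcons
      obtain ⟨k, ⟨hk1, hk2⟩, -⟩ := hincons e he ⟨i, j, hij⟩
      have hk : e ∈ L k := (hL k e).mpr ⟨he, hk1, hk2⟩
      rcases hi3 k with rfl|rfl|rfl
      · exact Or.inr (Or.inr (Or.inl hk))
      · exact Or.inr (Or.inr (Or.inr (Or.inl hk)))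
      · exact Or.inr (Or.inr (Or.inr (Or.inr hk)))
  have hSval : ∀ x ∈ SS, ∀ j : Fin 3, c j x = ε := fun x hx => (Finset.mem_filter.mp hx).2
  have hBval : ∀ x ∈ BBs, ∀ j : Fin 3, c j x = 1 := fun x hx => (Finset.mem_filter.mp hx).2
  have hdSB : Disjoint SS BBs := by
    rw [Finset.disjoint_left]; intro a ha hb
    exact hεne ((hSval a ha 0).symm.trans (hBval a hb 0))
  have hdSL : ∀ k, Disjoint SS (L k) := by
    intro k; rw [Finset.disjoint_left]; intro a ha hb
    exact hεne ((hSval a ha k).symm.trans ((hL k a).mp hb).2.1)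
  have hdBL : ∀ k, Disjoint BBs (L k) := by
    intro k; rw [Finset.disjoint_left]; intro a ha hb
    obtain ⟨j, hj⟩ : ∃ j : Fin 3, j ≠ k := by
      rcases hi3 k with rfl|rfl|rfl
      exacts [⟨1, by decide⟩, ⟨0, by decide⟩, ⟨0, by decide⟩]
    exact hεne ((((hL k a).mp hb).2.2 j hj).symm.trans (hBval a ha j))
  have hdLL : ∀ k k' : Fin 3, k ≠ k' → Disjoint (L k) (L k') := by
    intro k k' hkk; rw [Finset.disjoint_left]; intro a ha hb
    exact hεne ((((hL k' a).mp hb).2.2 k hkk).symm.trans (((hL k a).mp ha).2.1))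
  have key : ∀ r0 r1 r2 : Fin 3, r0 ≠ r1 → r0 ≠ r2 → r1 ≠ r2 →
      (∀ k : Fin 3, k = r0 ∨ k = r1 ∨ k = r2) → 2 ≤ (L r0).card → 1 ≤ (L r1).card →
      ∃ X : Fin 3 → Finset ι,
        (∀ i j, i ≠ j → Disjoint (X i) (X j)) ∧
        (Finset.univ.biUnion X = M) ∧
        (∀ i j : Fin 3, ∀ e ∈ X i,
          ∑ f ∈ (X i).erase e, c i f ≤ ∑ f ∈ X j, c i f) := by
    intro r0 r1 r2 d01 d02 d12 dcov hcard0 hcard1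
    have hunion' : SS ∪ BBs ∪ L r0 ∪ L r1 ∪ L r2 = M := by
      apply Finset.Subset.antisymm
      · exact Finset.union_subset (Finset.union_subset (Finset.union_subset
          (Finset.union_subset (Finset.filter_subset _ _) (Finset.filter_subset _ _))
          (hLsub r0)) (hLsub r1)) (hLsub r2)
      · intro a ha
        simp only [Finset.mem_union]
        rcases hcover a ha with h|h|h|h|h
        · tauto
        · tauto
        · rcases dcov 0 with h0|h0|h0 <;> rw [← h0] <;> tauto
        · rcases dcov 1 with h0|h0|h0 <;> rw [← h0] <;> tauto
        · rcases dcov 2 with h0|h0|h0 <;> rw [← h0] <;> tauto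
    obtain ⟨X', hXd, hXu, hXe⟩ :=
      aux M SS BBs (L r0) (L r1) (L r2)
        (fun a => if a = 0 then c r0 else if a = 1 then c r1 else c r2) ε hε0 hε1
        hdSB (hdSL r0) (hdSL r1) (hdSL r2) (hdBL r0) (hdBL r1) (hdBL r2)
        (hdLL r0 r1 d01) (hdLL r0 r2 d02) (hdLL r1 r2 d12) hunion'
        (fun x hx j => by
          rcases hi3 j with rfl|rfl|rfl
          exacts [hSval x hx r0, hSval x hx r1, hSval x hx r2])
        (fun x hx j => by
          rcases hi3 j with rfl|rfl|rfl
          exacts [hBval x hx r0, hBval x hx r1, hBval x hx r2])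
        (fun x hx => ⟨((hL r0 x).mp hx).2.1, ((hL r0 x).mp hx).2.2 r1 (Ne.symm d01),
          ((hL r0 x).mp hx).2.2 r2 (Ne.symm d02)⟩)
        (fun x hx => ⟨((hL r1 x).mp hx).2.2 r0 d01, ((hL r1 x).mp hx).2.1,
          ((hL r1 x).mp hx).2.2 r2 (Ne.symm d12)⟩)
        (fun x hx => ⟨((hL r2 x).mp hx).2.2 r0 d02, ((hL r2 x).mp hx).2.2 r1 d12,
          ((hL r2 x).mp hx).2.1⟩)
        hcard0 hcard1
    have e0 : (if r0 = r0 then (0:Fin 3) else if r0 = r1 then 1 else 2) = 0 := if_pos rfl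
    have e1 : (if r1 = r0 then (0:Fin 3) else if r1 = r1 then 1 else 2) = 1 := by
      rw [if_neg (Ne.symm d01), if_pos rfl]
    have e2 : (if r2 = r0 then (0:Fin 3) else if r2 = r1 then 1 else 2) = 2 := by
      rw [if_neg (Ne.symm d02), if_neg (Ne.symm d12)]
    refine ⟨fun k => X' (if k = r0 then 0 else if k = r1 then 1 else 2), ?_, ?_, ?_⟩
    · intro i j hij
      rcases dcov i with rfl|rfl|rfl <;> rcases dcov j with rfl|rfl|rfl <;> beta_reduce
      · exact absurd rfl hij
      · rw [e0, e1]; exact hXd 0 1 (by decide)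
      · rw [e0, e2]; exact hXd 0 2 (by decide)
      · rw [e1, e0]; exact hXd 1 0 (by decide)
      · exact absurd rfl hij
      · rw [e1, e2]; exact hXd 1 2 (by decide)
      · rw [e2, e0]; exact hXd 2 0 (by decide)
      · rw [e2, e1]; exact hXd 2 1 (by decide)
      · exact absurd rfl hij
    · ext a
      simp only [Finset.mem_biUnion, Finset.mem_univ, true_and]
      constructor
      · rintro ⟨i, hi⟩
        rw [← hXu]
        exact Finset.mem_biUnion.mpr ⟨_, Finset.mem_univ _, hi⟩
      · intro ha
        rw [← hXu] at ha
        obtain ⟨i', -, hi'⟩ := Finset.mem_biUnion.mp ha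
        rcases hi3 i' with rfl|rfl|rfl
        · refine ⟨r0, ?_⟩; beta_reduce; rw [e0]; exact hi'
        · refine ⟨r1, ?_⟩; beta_reduce; rw [e1]; exact hi'
        · refine ⟨r2, ?_⟩; beta_reduce; rw [e2]; exact hi' 
    · intro i j e he
      beta_reduce at he ⊢
      rcases dcov i with rfl|rfl|rfl
      · rw [e0] at he ⊢; exact hXe 0 _ e he
      · rw [e1] at he ⊢; exact hXe 1 _ e he
      · rw [e2] at he ⊢; exact hXe 2 _ e he
  obtain ⟨i0, hbig0⟩ := hbig
  obtain ⟨i1, i2, h01, h02, h12, hcov3⟩ : ∃ i1 i2 : Fin 3, i0 ≠ i1 ∧ i0 ≠ i2 ∧ i1 ≠ i2 ∧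
      ∀ k : Fin 3, k = i0 ∨ k = i1 ∨ k = i2 := by
    rcases hi3 i0 with rfl|rfl|rfl
    · exact ⟨1, 2, by decide, by decide, by decide, by decide⟩
    · exact ⟨0, 2, by decide, by decide, by decide, by decide⟩
    · exact ⟨0, 1, by decide, by decide, by decide, by decide⟩
  obtain ⟨w, hwM, hwne⟩ := hdiff i1 i2 h12
  obtain ⟨k, ⟨hk1, hk2⟩, -⟩ := hincons w hwM ⟨i1, i2, hwne⟩
  have hwk : w ∈ L k := (hL k w).mpr ⟨hwM, hk1, hk2⟩
  have hkcard : 1 ≤ (L k).card := Finset.card_pos.mpr ⟨w, hwk⟩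
  have hkmem : k = i1 ∨ k = i2 := by
    by_contra hcon
    push_neg at hcon
    have e1 : c i1 w = ε := hk2 i1 (fun h => hcon.1 h.symm)
    have e2 : c i2 w = ε := hk2 i2 (fun h => hcon.2 h.symm)
    exact hwne (e1.trans e2.symm)
  rcases hkmem with rfl | rfl
  · exact key i0 k i2 h01 h02 h12 hcov3 hbig0 hkcard
  · exact key i0 k i1 h02 h01 (Ne.symm h12)
      (fun x => by rcases hcov3 x with h|h|h <;> tauto) hbig0 hkcard
end

section
/- Let there be 3 agents and a finite set M of indivisible chores with additive bi-valued cost functions taking values in {ε, 1} for some 0 ≤ ε < 1, and suppose no two agents have identical cost functions. Suppose every inconsistent item (an item whose cost differs between some two agents) is large only to exactly one agent, and let L_i denote the set of items that are large only to agent i. If |L_i| ≤ 1 for every agent i, then there exists an EFX allocation. -/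
/-!
Every item of `M` is large for everybody, small for everybody, or large only to one agent `m`
(the at most one item of `L m`). First the common large items are dealt out in bundle sizes
differing by at most one, and the item of `L m` goes to an agent other than `m`, for whom it is
small; who gets the extra large items and who gets which `L m` depends on the number of common
large items modulo 3, and is chosen so that the result is EFX. In this allocation every item sits
with an agent for whom it is cheapest, so an agent with the least cost for its own bundle envies
nobody. Giving it a common small item, which is then the cheapest item of its bundle, keeps the
allocation EFX, and this is repeated until the small items are used up.
-/

open Finset Function

section

variable {α ι : Type*}

def IsMinCost (c : α → ι → ℝ) (X : α → Finset ι) : Prop :=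
  ∀ i j, ∀ e ∈ X j, c j e ≤ c i e

def IsLargeOnly (c : α → ι → ℝ) (ε : ℝ) (i : α) (e : ι) : Prop :=
  c i e = 1 ∧ ∀ j, j ≠ i → c j e = ε

variable {c : α → ι → ℝ} {ε : ℝ}

theorem IsLargeOnly.eq (hε : ε ≠ 1) {i j : α} {e : ι} (hi : IsLargeOnly c ε i e)
    (hj : IsLargeOnly c ε j e) : i = j :=
  by_contra fun h => hε ((hj.2 i h).symm.trans hi.1)

theorem IsLargeOnly.not_forall_eq_one [Nontrivial α] (hε : ε ≠ 1) {i : α} {e : ι}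
    (h : IsLargeOnly c ε i e) : ¬∀ j, c j e = 1 := fun h' =>
  let ⟨j, hj⟩ := exists_ne i
  hε ((h.2 j hj).symm.trans (h' j))

variable [DecidableEq ι]

def IsEFX (c : α → ι → ℝ) (X : α → Finset ι) : Prop :=
  ∀ i j, ∀ e ∈ X i, ∑ f ∈ (X i).erase e, c i f ≤ ∑ f ∈ X j, c i f

theorem isEFX_union_of_card (hε : ε ≤ 1) {B T : α → Finset ι} {n : α → ℕ}
    (hB : ∀ i j, ∀ e ∈ B j, c i e = 1) (hBn : ∀ i, #(B i) = n i)
    (hT : ∀ i, ∀ e ∈ T i, c i e = ε) (hT0 : ∀ i j, ∀ e ∈ T j, 0 ≤ c i e)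
    (hBT : ∀ i, Disjoint (B i) (T i))
    (hcrit : ∀ i j, i ≠ j → (n i : ℝ) + #(T i) ≤ n j + 1 + ∑ e ∈ T j, c i e) :
    IsEFX c fun i => B i ∪ T i := by
  have hsum : ∀ i j, ∑ f ∈ B j ∪ T j, c i f = n j + ∑ f ∈ T j, c i f := by
    intro i j
    rw [sum_union (hBT j), sum_congr rfl (hB i j), sum_const, hBn, nsmul_one]
  intro i j e he
  have hce : 0 ≤ c i e := by
    rcases mem_union.1 he with h | h
    · rw [hB i i e h]; exact zero_le_one
    · exact hT0 i i e h
  rcases eq_or_ne i j with rfl | hij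
  · rw [sum_erase_eq_sub he]; linarith
  have hown : ∑ f ∈ (B i ∪ T i).erase e, c i f ≤ n i + #(T i) - 1 := by
    rw [sum_erase_eq_sub he, hsum, sum_congr rfl (hT i), sum_const, nsmul_eq_mul]
    have ht : (0 : ℝ) ≤ #(T i) := Nat.cast_nonneg _
    rcases mem_union.1 he with h | h
    · rw [hB i i e h]; nlinarith
    · have ht1 : (1 : ℝ) ≤ #(T i) := by exact_mod_cast card_pos.2 ⟨e, h⟩
      rw [hT i e h]; nlinarith
  dsimp only
  rw [hsum]
  linarith [hcrit i j hij]

theorem exists_partition_card [Fintype α] (s : Finset ι) (n : α → ℕ) (h : ∑ i, n i = #s) :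
    ∃ B : α → Finset ι, Pairwise (Disjoint on B) ∧ univ.biUnion B = s ∧ ∀ i, #(B i) = n i := by
  obtain ⟨e⟩ : Nonempty ((Σ i, Fin (n i)) ≃ s) := Fintype.card_eq.1 (by simp [h])
  have he : Injective fun p => (e p : ι) := Subtype.val_injective.comp e.injective
  refine ⟨fun i => univ.map ⟨fun k => e ⟨i, k⟩, he.comp sigma_mk_injective⟩, ?_, ?_, ?_⟩
  · intro i j hij
    simp only [onFun, disjoint_left, mem_map, mem_univ, true_and]
    rintro _ ⟨k, rfl⟩ ⟨l, hl⟩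
    exact hij (congrArg Sigma.fst (he hl)).symm
  · ext x
    simp only [mem_biUnion, mem_univ, true_and, mem_map]
    refine ⟨fun ⟨i, k, hk⟩ => hk ▸ (e ⟨i, k⟩).2, fun hx => ?_⟩
    obtain ⟨⟨i, k⟩, hk⟩ := e.surjective ⟨x, hx⟩
    exact ⟨i, k, by simp [hk]⟩
  · intro i
    simp

section ReceivedBy

variable [DecidableEq α] [Fintype α]

def receivedBy (σ : α → α) (L : α → Finset ι) (j : α) : Finset ι :=
  ({m | σ m = j} : Finset α).biUnion L

variable {σ : α → α} {L : α → Finset ι}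

theorem mem_receivedBy {j : α} {e : ι} : e ∈ receivedBy σ L j ↔ ∃ m, σ m = j ∧ e ∈ L m := by
  simp [receivedBy]

theorem subset_receivedBy (i : α) : L i ⊆ receivedBy σ L (σ i) :=
  fun _ he => mem_receivedBy.2 ⟨i, rfl, he⟩

theorem biUnion_receivedBy : univ.biUnion (receivedBy σ L) = univ.biUnion L := by
  ext e
  simp only [mem_biUnion, mem_univ, true_and, mem_receivedBy]
  exact ⟨fun ⟨_, m, _, he⟩ => ⟨m, he⟩, fun ⟨m, he⟩ => ⟨σ m, m, rfl, he⟩⟩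

theorem pairwise_disjoint_receivedBy (hL : Pairwise (Disjoint on L)) :
    Pairwise (Disjoint on receivedBy σ L) := by
  intro i j hij
  refine disjoint_left.2 fun e hi hj => ?_
  obtain ⟨m, rfl, hm⟩ := mem_receivedBy.1 hi
  obtain ⟨m', rfl, hm'⟩ := mem_receivedBy.1 hj
  exact disjoint_left.1 (hL fun h => hij (congrArg σ h)) hm hm'

theorem card_receivedBy_le (j : α) : #(receivedBy σ L j) ≤ ∑ m with σ m = j, #(L m) :=
  card_biUnion_le

theorem cost_of_mem_receivedBy (hε : ε ≤ 1) (hL : ∀ m, ∀ e ∈ L m, IsLargeOnly c ε m e)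
    (hσ : ∀ m, σ m ≠ m) {i j : α} {e : ι} (he : e ∈ receivedBy σ L j) :
    c j e = ε ∧ ε ≤ c i e := by
  obtain ⟨m, rfl, hm⟩ := mem_receivedBy.1 he
  obtain ⟨hmm, hother⟩ := hL m e hm
  refine ⟨hother _ (hσ m), ?_⟩
  rcases eq_or_ne i m with rfl | hi
  · rw [hmm]; exact hε
  · rw [hother i hi]

theorem ite_le_sum_receivedBy (hε0 : 0 ≤ ε) (hε : ε ≤ 1)
    (hL : ∀ m, ∀ e ∈ L m, IsLargeOnly c ε m e) (hσ : ∀ m, σ m ≠ m) (i j : α) :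
    (if σ i = j ∧ 0 < #(L i) then 1 else 0 : ℝ) ≤ ∑ e ∈ receivedBy σ L j, c i e := by
  have hnonneg : ∀ k, ∀ f ∈ receivedBy σ L k, 0 ≤ c i f :=
    fun _ f hf => hε0.trans (cost_of_mem_receivedBy hε hL hσ hf).2
  split_ifs with h
  · obtain ⟨rfl, hpos⟩ := h
    obtain ⟨e, he⟩ := card_pos.1 hpos
    rw [← (hL i e he).1]
    exact single_le_sum (hnonneg _) (subset_receivedBy i he)
  · exact sum_nonneg (hnonneg j)

theorem exists_isEFX_of_receivedBy (hε0 : 0 ≤ ε) (hε : ε ≤ 1) {Big : Finset ι}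
    (hBig : ∀ i, ∀ e ∈ Big, c i e = 1) (hL : ∀ m, ∀ e ∈ L m, IsLargeOnly c ε m e)
    (hLBig : ∀ m, Disjoint (L m) Big) (hLdisj : Pairwise (Disjoint on L)) (hσ : ∀ m, σ m ≠ m)
    (n : α → ℕ) (hn : ∑ i, n i = #Big)
    (hcrit : ∀ i j, i ≠ j →
      n i + ∑ m with σ m = i, #(L m) ≤ n j + 1 + if σ i = j ∧ 0 < #(L i) then 1 else 0) :
    ∃ X : α → Finset ι, Pairwise (Disjoint on X) ∧ univ.biUnion X = Big ∪ univ.biUnion L ∧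
      IsMinCost c X ∧ (∀ i, ∀ e ∈ X i, ε ≤ c i e) ∧ IsEFX c X := by
  obtain ⟨B, hBdisj, hBU, hBn⟩ := exists_partition_card Big n hn
  have hBsub : ∀ i, B i ⊆ Big := fun i => hBU ▸ subset_biUnion_of_mem B (mem_univ i)
  have hBT : ∀ i j, Disjoint (B i) (receivedBy σ L j) := by
    intro i j
    refine disjoint_left.2 fun e hB hT => ?_
    obtain ⟨m, -, hm⟩ := mem_receivedBy.1 hT
    exact disjoint_left.1 (hLBig m) hm (hBsub i hB)
  have hTcost : ∀ i j, ∀ e ∈ receivedBy σ L j, c j e = ε ∧ ε ≤ c i e :=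
    fun _ _ _ he => cost_of_mem_receivedBy hε hL hσ he
  refine ⟨fun i => B i ∪ receivedBy σ L i, ?_, ?_, ?_, ?_, ?_⟩
  · intro i j hij
    simp only [onFun, disjoint_union_left, disjoint_union_right]
    exact ⟨⟨hBdisj hij, (hBT j i).symm⟩, hBT i j, pairwise_disjoint_receivedBy hLdisj hij⟩
  · rw [biUnion_union, hBU, biUnion_receivedBy]
  · intro i j e he
    rcases mem_union.1 he with h | h
    · rw [hBig i e (hBsub j h), hBig j e (hBsub j h)]
    · exact (hTcost i j e h).1 ▸ (hTcost i j e h).2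
  · intro i e he
    rcases mem_union.1 he with h | h
    · rw [hBig i e (hBsub i h)]; exact hε
    · exact (hTcost i i e h).1.ge
  refine isEFX_union_of_card hε (fun i j e he => hBig i e (hBsub j he)) hBn
    (fun i e he => (hTcost i i e he).1) (fun i j e he => hε0.trans (hTcost i j e he).2)
    (fun i => hBT i i) fun i j hij => ?_
  have hnat : n i + #(receivedBy σ L i) ≤ n j + 1 + if σ i = j ∧ 0 < #(L i) then 1 else 0 :=
    (Nat.add_le_add_left (card_receivedBy_le i) _).trans (hcrit i j hij)
  have hreal := (Nat.cast_le (α := ℝ)).2 hnat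
  push_cast [Nat.cast_ite] at hreal
  linarith [ite_le_sum_receivedBy hε0 hε hL hσ i j]

end ReceivedBy

theorem exists_isEFX_of_card_le_one {c : Fin 3 → ι → ℝ} {ε : ℝ} (hε0 : 0 ≤ ε) (hε : ε ≤ 1)
    {Big : Finset ι} (hBig : ∀ i, ∀ e ∈ Big, c i e = 1) {L : Fin 3 → Finset ι}
    (hL : ∀ m, ∀ e ∈ L m, IsLargeOnly c ε m e) (hLBig : ∀ m, Disjoint (L m) Big)
    (hLdisj : Pairwise (Disjoint on L)) (hLcard : ∀ m, #(L m) ≤ 1) :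
    ∃ X : Fin 3 → Finset ι, Pairwise (Disjoint on X) ∧ univ.biUnion X = Big ∪ univ.biUnion L ∧
      IsMinCost c X ∧ (∀ i, ∀ e ∈ X i, ε ≤ c i e) ∧ IsEFX c X := by
  -- When `|Big| mod 3 ≠ 0`, the agent `k + 1` receiving `L k` may envy a bundle by one item;
  -- it does not if that bundle holds its own large item, which needs `L (k + 1) ≠ ∅`.
  obtain ⟨k, hk⟩ : ∃ k : Fin 3, 0 < #(L k) → 0 < #(L (k + 1)) := by
    by_contra! h
    exact absurd (h 1).1 (not_lt.2 (h 0).2)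
  have := hLcard 0
  have := hLcard 1
  have := hLcard 2
  obtain hr | hr | hr : #Big % 3 = 0 ∨ #Big % 3 = 1 ∨ #Big % 3 = 2 := by omega
  · refine exists_isEFX_of_receivedBy hε0 hε hBig hL hLBig hLdisj (σ := (· + 1)) (by decide)
      (fun _ => #Big / 3)
      (by simp only [sum_const, card_univ, Fintype.card_fin, smul_eq_mul]; omega) fun i j hij => ?_
    fin_cases i <;> fin_cases j <;> simp [Fin.sum_univ_three, sum_filter] at hij ⊢ <;> omega
  · refine exists_isEFX_of_receivedBy hε0 hε hBig hL hLBig hLdisj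
      (σ := fun m => if m = k + 1 then k + 2 else k + 1) (by fin_cases k <;> decide)
      (fun i => if i = k then #Big / 3 + 1 else #Big / 3)
      (by fin_cases k <;> simp [Fin.sum_univ_three] <;> omega) fun i j hij => ?_
    fin_cases k <;> fin_cases i <;> fin_cases j <;>
      simp [Fin.sum_univ_three, sum_filter, -card_pos] at hij hk ⊢ <;> (try split_ifs) <;> omega
  · refine exists_isEFX_of_receivedBy hε0 hε hBig hL hLBig hLdisj
      (σ := fun m => if m = k then k + 1 else k) (by fin_cases k <;> decide)
      (fun i => if i = k then #Big / 3 else #Big / 3 + 1)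
      (by fin_cases k <;> simp [Fin.sum_univ_three] <;> omega) fun i j hij => ?_
    fin_cases k <;> fin_cases i <;> fin_cases j <;>
      simp [Fin.sum_univ_three, sum_filter, -card_pos] at hij hk ⊢ <;> (try split_ifs) <;> omega

section SmallItems

variable [DecidableEq α] {X : α → Finset ι}

theorem mem_update_insert {i₀ i : α} {a e : ι} (he : e ∈ update X i₀ (insert a (X i₀)) i) :
    e = a ∨ e ∈ X i := by
  rcases eq_or_ne i i₀ with rfl | hi
  · simpa using he
  · exact .inr (by simpa [update_of_ne hi] using he)

theorem pairwise_disjoint_update_insert (hX : Pairwise (Disjoint on X)) {i₀ : α} {a : ι}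
    (ha : ∀ i, a ∉ X i) : Pairwise (Disjoint on update X i₀ (insert a (X i₀))) := by
  intro i j hij
  simp only [onFun, update_apply]
  split_ifs with hi hj hj
  · exact absurd (hi.trans hj.symm) hij
  · subst hi; exact disjoint_insert_left.2 ⟨ha j, hX hij⟩
  · subst hj; exact disjoint_insert_right.2 ⟨ha i, hX hij⟩
  · exact hX hij

theorem IsEFX.update_insert (hX : IsEFX c X) {i₀ : α} {a : ι} (ha : a ∉ X i₀)
    (hfree : ∀ j, ∑ f ∈ X i₀, c i₀ f ≤ ∑ f ∈ X j, c i₀ f)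
    (hcheap : ∀ e ∈ X i₀, c i₀ a ≤ c i₀ e) (ha0 : ∀ i, 0 ≤ c i a) :
    IsEFX c (update X i₀ (insert a (X i₀))) := by
  have hgrow : ∀ i j, ∑ f ∈ X j, c i f ≤ ∑ f ∈ update X i₀ (insert a (X i₀)) j, c i f := by
    intro i j
    rcases eq_or_ne j i₀ with rfl | hj
    · rw [update_self, sum_insert ha]
      linarith [ha0 i]
    · rw [update_of_ne hj]
  intro i j e he
  refine le_trans ?_ (hgrow i j)
  rcases eq_or_ne i i₀ with rfl | hi
  · rw [update_self] at he ⊢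
    refine le_trans ?_ (hfree j)
    rcases mem_insert.1 he with rfl | he
    · rw [erase_insert ha]
    · rw [erase_insert_of_ne (ne_of_mem_of_not_mem he ha).symm, sum_insert (by simp [ha]),
        sum_erase_eq_sub he]
      linarith [hcheap e he]
  · rw [update_of_ne hi] at he ⊢
    exact hX i j e he

variable [Fintype α]

theorem biUnion_update_insert (i₀ : α) (a : ι) :
    univ.biUnion (update X i₀ (insert a (X i₀))) = insert a (univ.biUnion X) := by
  ext e
  simp only [mem_biUnion, mem_univ, true_and, mem_insert, update_apply]
  constructor
  · rintro ⟨i, hi⟩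
    split_ifs at hi with h
    · grind
    · exact .inr ⟨i, hi⟩
  · rintro (rfl | ⟨i, hi⟩)
    · exact ⟨i₀, by simp⟩
    · exact ⟨i, by split_ifs with h <;> grind⟩

variable [Nonempty α]

theorem exists_isEFX_insert_of_cost_eq (hε : 0 ≤ ε) (hX : Pairwise (Disjoint on X))
    (hmin : IsMinCost c X) (hlb : ∀ i, ∀ e ∈ X i, ε ≤ c i e) (hefx : IsEFX c X)
    {a : ι} (ha : a ∉ univ.biUnion X) (hca : ∀ i, c i a = ε) :
    ∃ Y : α → Finset ι, Pairwise (Disjoint on Y) ∧ univ.biUnion Y = insert a (univ.biUnion X) ∧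
      IsMinCost c Y ∧ (∀ i, ∀ e ∈ Y i, ε ≤ c i e) ∧ IsEFX c Y := by
  obtain ⟨i₀, hi₀⟩ := Finite.exists_min fun i => ∑ f ∈ X i, c i f
  have ha' : ∀ i, a ∉ X i := fun i h => ha (mem_biUnion.2 ⟨i, mem_univ i, h⟩)
  have hfree : ∀ j, ∑ f ∈ X i₀, c i₀ f ≤ ∑ f ∈ X j, c i₀ f :=
    fun j => (hi₀ j).trans (sum_le_sum (hmin i₀ j))
  refine ⟨update X i₀ (insert a (X i₀)), pairwise_disjoint_update_insert hX ha',
    biUnion_update_insert i₀ a, ?_, ?_,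
    hefx.update_insert (ha' i₀) hfree (fun e he => hca i₀ ▸ hlb i₀ e he) (fun i => hca i ▸ hε)⟩
  · intro i j e he
    rcases mem_update_insert he with rfl | he
    · rw [hca, hca]
    · exact hmin i j e he
  · intro i e he
    rcases mem_update_insert he with rfl | he
    · rw [hca]
    · exact hlb i e he

theorem exists_isEFX_union_of_cost_eq (hε : 0 ≤ ε) {S : Finset ι}
    (hS : ∀ a ∈ S, ∀ i, c i a = ε) :
    ∀ X : α → Finset ι, Disjoint S (univ.biUnion X) → Pairwise (Disjoint on X) →
      IsMinCost c X → (∀ i, ∀ e ∈ X i, ε ≤ c i e) → IsEFX c X →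
      ∃ Y : α → Finset ι, Pairwise (Disjoint on Y) ∧ univ.biUnion Y = univ.biUnion X ∪ S ∧
        IsMinCost c Y ∧ (∀ i, ∀ e ∈ Y i, ε ≤ c i e) ∧ IsEFX c Y := by
  induction S using Finset.induction_on with
  | empty => exact fun X _ hX hmin hlb hefx => ⟨X, hX, (union_empty _).symm, hmin, hlb, hefx⟩
  | insert a S haS ih =>
    intro X hSX hX hmin hlb hefx
    obtain ⟨Y, hY, hYX, hYmin, hYlb, hYefx⟩ := exists_isEFX_insert_of_cost_eq hε hX hmin hlb hefx
      (disjoint_left.1 hSX (mem_insert_self a S)) (hS a (mem_insert_self a S))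
    obtain ⟨Z, hZ, hZY, hZrest⟩ := ih (fun b hb => hS b (mem_insert_of_mem hb)) Y
      (by rw [hYX, disjoint_insert_right]; exact ⟨haS, (disjoint_insert_left.1 hSX).2⟩)
      hY hYmin hYlb hYefx
    refine ⟨Z, hZ, ?_, hZrest⟩
    rw [hZY, hYX, union_insert, insert_union]

end SmallItems

theorem filter_union_biUnion_union_filter [Fintype α] [Nonempty α] {M : Finset ι}
    {L : α → Finset ι} [DecidablePred fun e => ∀ i, c i e = 1]
    [DecidablePred fun e => ∀ i, c i e = ε] (hbi : ∀ i, ∀ e ∈ M, c i e = ε ∨ c i e = 1)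
    (hincons : ∀ e ∈ M, (∃ i j, c i e ≠ c j e) → ∃ i, IsLargeOnly c ε i e)
    (hL : ∀ i e, e ∈ L i ↔ e ∈ M ∧ IsLargeOnly c ε i e) :
    {e ∈ M | ∀ i, c i e = 1} ∪ univ.biUnion L ∪ {e ∈ M | ∀ i, c i e = ε} = M := by
  refine Subset.antisymm
    (union_subset (union_subset (filter_subset _ _) fun e he => ?_) (filter_subset _ _))
    fun e he => ?_
  · obtain ⟨i, -, hi⟩ := mem_biUnion.1 he
    exact ((hL i e).1 hi).1
  by_cases h : ∃ i j, c i e ≠ c j e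
  · obtain ⟨i, hi⟩ := hincons e he h
    exact mem_union_left _ (mem_union_right _ (mem_biUnion.2 ⟨i, mem_univ i, (hL i e).2 ⟨he, hi⟩⟩))
  replace h : ∀ i j, c i e = c j e := by simpa using h
  obtain ⟨i₀⟩ := ‹Nonempty α›
  rcases hbi i₀ e he with h0 | h1
  · exact mem_union_right _ (mem_filter.2 ⟨he, fun i => (h i i₀).trans h0⟩)
  · exact mem_union_left _ (mem_union_left _ (mem_filter.2 ⟨he, fun i => (h i i₀).trans h1⟩))

end

theorem stmt_16_general {ι : Type*} [DecidableEq ι] (M : Finset ι)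
    (c : Fin 3 → ι → ℝ) (ε : ℝ) (hε0 : 0 ≤ ε) (hε1 : ε < 1)
    (hbi : ∀ i, ∀ e ∈ M, c i e = ε ∨ c i e = 1)
    (hincons : ∀ e ∈ M, (∃ i j : Fin 3, c i e ≠ c j e) →
      ∃! i : Fin 3, c i e = 1 ∧ ∀ j, j ≠ i → c j e = ε)
    (L : Fin 3 → Finset ι)
    (hL : ∀ i e, e ∈ L i ↔ e ∈ M ∧ c i e = 1 ∧ ∀ j, j ≠ i → c j e = ε)
    (hsmallL : ∀ i, (L i).card ≤ 1) :
    ∃ X : Fin 3 → Finset ι,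
      (∀ i j, i ≠ j → Disjoint (X i) (X j)) ∧
      (Finset.univ.biUnion X = M) ∧
      (∀ i j : Fin 3, ∀ e ∈ X i,
        ∑ f ∈ (X i).erase e, c i f ≤ ∑ f ∈ X j, c i f) := by
  have hε : ε ≠ 1 := hε1.ne
  have hlarge : ∀ m, ∀ e ∈ L m, IsLargeOnly c ε m e := fun m e he => ((hL m e).1 he).2
  obtain ⟨X, hXdisj, hXU, hXmin, hXlb, hXefx⟩ := exists_isEFX_of_card_le_one hε0 hε1.le
    (Big := {e ∈ M | ∀ i, c i e = 1}) (fun i e he => (mem_filter.1 he).2 i) hlarge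
    (fun m => disjoint_left.2 fun e hm hB =>
      (hlarge m e hm).not_forall_eq_one hε (mem_filter.1 hB).2)
    (fun i j hij => disjoint_left.2 fun e hi hj => hij ((hlarge i e hi).eq hε (hlarge j e hj)))
    hsmallL
  have hSX : Disjoint {e ∈ M | ∀ i, c i e = ε} (univ.biUnion X) := by
    refine hXU ▸ disjoint_left.2 fun e hS hX => ?_
    have hSe := (mem_filter.1 hS).2
    rcases mem_union.1 hX with hB | hLe
    · exact hε ((hSe 0).symm.trans ((mem_filter.1 hB).2 0))
    · obtain ⟨m, -, hm⟩ := mem_biUnion.1 hLe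
      exact hε ((hSe m).symm.trans (hlarge m e hm).1)
  obtain ⟨Y, hYdisj, hYU, -, -, hYefx⟩ := exists_isEFX_union_of_cost_eq hε0
    (S := {e ∈ M | ∀ i, c i e = ε}) (fun a ha i => (mem_filter.1 ha).2 i) X hSX hXdisj hXmin hXlb
    hXefx
  refine ⟨Y, hYdisj, ?_, hYefx⟩
  rw [hYU, hXU]
  exact filter_union_biUnion_union_filter hbi (fun e he h => (hincons e he h).exists) hL

/-- 3 agents with additive bi-valued cost functions taking values in `{ε, 1}` with
`0 ≤ ε < 1`, no two agents having identical cost functions.  Suppose every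
inconsistent item is large only to exactly one agent, and `L i` is the set of items
large only to agent `i`.  If `|L_i| ≤ 1` for every agent `i`, then there exists an
EFX allocation. -/
theorem stmt_16 {ι : Type*} [DecidableEq ι] (M : Finset ι)
    (c : Fin 3 → ι → ℝ) (ε : ℝ) (hε0 : 0 ≤ ε) (hε1 : ε < 1)
    (hbi : ∀ i, ∀ e ∈ M, c i e = ε ∨ c i e = 1)
    (hdiff : ∀ i j : Fin 3, i ≠ j → ∃ e ∈ M, c i e ≠ c j e)
    (hincons : ∀ e ∈ M, (∃ i j : Fin 3, c i e ≠ c j e) →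
      ∃! i : Fin 3, c i e = 1 ∧ ∀ j, j ≠ i → c j e = ε)
    (L : Fin 3 → Finset ι)
    (hL : ∀ i e, e ∈ L i ↔ e ∈ M ∧ c i e = 1 ∧ ∀ j, j ≠ i → c j e = ε)
    (hsmallL : ∀ i, (L i).card ≤ 1) :
    ∃ X : Fin 3 → Finset ι,
      (∀ i j, i ≠ j → Disjoint (X i) (X j)) ∧
      (Finset.univ.biUnion X = M) ∧
      (∀ i j : Fin 3, ∀ e ∈ X i,
        ∑ f ∈ (X i).erase e, c i f ≤ ∑ f ∈ X j, c i f) :=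
  stmt_16_general M c ε hε0 hε1 hbi hincons L hL hsmallL
end

section
/- Let there be n ≥ 2 agents and a finite set M of indivisible chores with additive bi-valued cost functions taking values in {ε, 1} for some 0 ≤ ε < 1. Let M^+ = {e ∈ M : c_i(e) = 1 for all agents i} be the set of consistently large items. If |M^+| ≥ n − 1, then there exists a 2-EFX allocation: an allocation X = (X_1,…,X_n) of M such that for all agents i, j and every e ∈ X_i, c_i(X_i \ {e}) ≤ 2·c_i(X_j). -/
/-!
All agents but one, `j₀`, receive a consistently large item as a pregift, worth at least `1` to
every agent. If there are `n` consistently large items, `j₀` gets one as well. Otherwise, if some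
agent `i₀` finds at least `1/ε` of the other items small, `j₀ = i₀` gets `⌈1/ε⌉` of them: worth at
least `1` to everybody and less than `1 + ε` to `i₀`. The remaining items are distributed by round
robin, which is envy-free up to an additive `1`, and the pregifts turn this into the factor `2`.
In the remaining case each item that is not consistently large goes to the first agent finding it
small. Every bundle then costs its owner less than `2`, and the last agent `j₀` receiving such
items gets no large item: its bundle costs `1` per item to every earlier agent.
-/

open Finset Function

section

variable {α ι : Type*}

lemma sum_eq_card_of_forall_eq_one {s : Finset ι} {g : ι → ℝ} (h : ∀ e ∈ s, g e = 1) :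
    ∑ f ∈ s, g f = s.card := by
  rw [sum_eq_card_nsmul h, nsmul_one]

variable [DecidableEq ι]

def IsApproxEFX (a : ℝ) (c : α → ι → ℝ) (X : α → Finset ι) : Prop :=
  ∀ i j, ∀ e ∈ X i, ∑ f ∈ (X i).erase e, c i f ≤ a * ∑ f ∈ X j, c i f

lemma isApproxEFX_of_card_le_one_or_sum_le {a : ℝ} (ha : 1 ≤ a) {c : α → ι → ℝ}
    {X : α → Finset ι} (hc0 : ∀ i j, ∀ e ∈ X j, 0 ≤ c i e)
    (h : ∀ i, (X i).card ≤ 1 ∨ ∀ j ≠ i, ∑ f ∈ X i, c i f ≤ a * ∑ f ∈ X j, c i f) :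
    IsApproxEFX a c X := by
  intro i j e he
  have hXj : 0 ≤ ∑ f ∈ X j, c i f := sum_nonneg (hc0 i j)
  rcases h i with hcard | hle
  · have hXi : (X i).erase e = ∅ := card_eq_zero.1 (by rw [card_erase_of_mem he]; omega)
    rw [hXi, sum_empty]
    exact mul_nonneg (by linarith) hXj
  · have herase : ∑ f ∈ (X i).erase e, c i f ≤ ∑ f ∈ X i, c i f :=
      sum_le_sum_of_subset_of_nonneg (erase_subset e _) fun f hf _ => hc0 i i f hf
    rcases eq_or_ne j i with rfl | hji
    · exact herase.trans (le_mul_of_one_le_left hXj ha)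
    · exact herase.trans (hle j hji)

/-- The invariant maintained by round robin in which agents with smaller priority `π` pick
first. -/
def PickingInvariant (c : α → ι → ℝ) (π : α → ℕ) (Q : α → Finset ι) : Prop :=
  (∀ i j, π i < π j → ∑ f ∈ Q i, c i f ≤ ∑ f ∈ Q j, c i f + 1) ∧
  ∀ i j, π j < π i → (Q i).Nonempty →
    ∃ y ∈ Q j, ∑ f ∈ Q i, c i f ≤ ∑ f ∈ (Q j).erase y, c i f + 1

/-- One round-robin step: the first picker `r` takes its cheapest item `x` and moves to the back
of the queue. -/
lemma PickingInvariant.update_insert [DecidableEq α] {c : α → ι → ℝ} {π π' : α → ℕ}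
    {Q : α → Finset ι} {r : α} {x : ι} (hQ : PickingInvariant c π' Q) (hr : ∀ j, π r ≤ π j)
    (hπ' : ∀ j ≠ r, π' j = π j) (hπ'r : ∀ j ≠ r, π' j < π' r) (hx : ∀ j, x ∉ Q j)
    (hxmin : ∀ j, ∀ y ∈ Q j, c r x ≤ c r y) (hx1 : c r x ≤ 1) (hc0 : ∀ j, ∀ y ∈ Q j, 0 ≤ c r y) :
    PickingInvariant c π (update Q r (insert x (Q r))) := by
  constructor
  · intro i j hij
    have hj : j ≠ r := by rintro rfl; exact (hr i).not_gt hij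
    rw [update_of_ne hj]
    rcases eq_or_ne i r with rfl | hi
    · rw [update_self, sum_insert (hx i)]
      rcases (Q i).eq_empty_or_nonempty with hQi | hQi
      · rw [hQi, sum_empty, add_zero]
        linarith [sum_nonneg (hc0 j)]
      · obtain ⟨y, hy, hle⟩ := hQ.2 i j (hπ'r j hj) hQi
        linarith [hxmin j y hy, add_sum_erase (Q j) (c i) hy]
    · rw [update_of_ne hi]
      exact hQ.1 i j (by rwa [hπ' i hi, hπ' j hj])
  · intro i j hji hne
    have hi : i ≠ r := by rintro rfl; exact (hr j).not_gt hji
    rw [update_of_ne hi] at hne ⊢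
    rcases eq_or_ne j r with rfl | hj
    · refine ⟨x, by simp, ?_⟩
      rw [update_self, erase_insert (hx j)]
      exact hQ.1 i j (hπ'r i hi)
    · rw [update_of_ne hj]
      exact hQ.2 i j (by rwa [hπ' i hi, hπ' j hj]) hne

variable [Fintype α]

structure IsAllocation (M : Finset ι) (X : α → Finset ι) : Prop where
  disjoint : ∀ i j, i ≠ j → Disjoint (X i) (X j)
  biUnion_eq : univ.biUnion X = M

namespace IsAllocation

variable {A B : Finset ι} {X Y : α → Finset ι}

lemma subset (hX : IsAllocation A X) (i : α) : X i ⊆ A :=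
  hX.biUnion_eq ▸ subset_biUnion_of_mem X (mem_univ i)

lemma empty : IsAllocation (∅ : Finset ι) (fun _ : α => ∅) where
  disjoint _ _ _ := disjoint_empty_left _
  biUnion_eq := by ext; simp

lemma filter_eq [DecidableEq α] (A : Finset ι) (f : ι → α) :
    IsAllocation A (fun i => A.filter (f · = i)) where
  disjoint _ _ hij := disjoint_filter.2 fun _ _ hi hj => hij (hi ▸ hj)
  biUnion_eq := biUnion_filter_eq_of_maps_to fun _ _ => mem_univ _

lemma union (hX : IsAllocation A X) (hY : IsAllocation B Y) (hAB : Disjoint A B) :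
    IsAllocation (A ∪ B) (fun i => X i ∪ Y i) where
  disjoint i j hij := by
    rw [disjoint_union_left, disjoint_union_right, disjoint_union_right]
    exact ⟨⟨hX.disjoint i j hij, hAB.mono (hX.subset i) (hY.subset j)⟩,
      (hAB.mono (hX.subset j) (hY.subset i)).symm, hY.disjoint i j hij⟩
  biUnion_eq := by rw [biUnion_union, hX.biUnion_eq, hY.biUnion_eq]

lemma update_union [DecidableEq α] (hX : IsAllocation A X) (hBA : Disjoint B A) (r : α) :
    IsAllocation (B ∪ A) (update X r (B ∪ X r)) where
  disjoint i j hij := by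
    rcases eq_or_ne i r with rfl | hi
    · rw [update_self, update_of_ne hij.symm, disjoint_union_left]
      exact ⟨hBA.mono_right (hX.subset j), hX.disjoint i j hij⟩
    rcases eq_or_ne j r with rfl | hj
    · rw [update_self, update_of_ne hi, disjoint_union_right]
      exact ⟨(hBA.mono_right (hX.subset i)).symm, hX.disjoint i j hij⟩
    rw [update_of_ne hi, update_of_ne hj]
    exact hX.disjoint i j hij
  biUnion_eq := by
    ext e
    simp only [mem_biUnion, mem_univ, true_and, mem_union, ← hX.biUnion_eq]
    constructor
    · rintro ⟨i, hi⟩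
      rcases eq_or_ne i r with rfl | hir
      · simp only [update_self, mem_union] at hi
        exact hi.imp_right fun h => ⟨i, h⟩
      · exact Or.inr ⟨i, by rwa [update_of_ne hir] at hi⟩
    · rintro (he | ⟨i, hi⟩)
      · exact ⟨r, by simp [he]⟩
      · rcases eq_or_ne i r with rfl | hir
        · exact ⟨i, by simp [hi]⟩
        · exact ⟨i, by rwa [update_of_ne hir]⟩

lemma update_insert [DecidableEq α] (hX : IsAllocation A X) {x : ι} (hx : x ∉ A) (r : α) :
    IsAllocation (insert x A) (update X r (insert x (X r))) := by
  simpa only [insert_eq] using hX.update_union (disjoint_singleton_left.2 hx) r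

end IsAllocation

theorem exists_isAllocation_pickingInvariant [Nonempty α] [DecidableEq α] (c : α → ι → ℝ)
    (R : Finset ι) (hc0 : ∀ i, ∀ e ∈ R, 0 ≤ c i e) (hc1 : ∀ i, ∀ e ∈ R, c i e ≤ 1)
    (π : α → ℕ) : ∃ Q, IsAllocation R Q ∧ PickingInvariant c π Q := by
  induction R using Finset.strongInduction generalizing π with
  | H R ih =>
  rcases R.eq_empty_or_nonempty with rfl | hR
  · exact ⟨fun _ => ∅, IsAllocation.empty, by simp [PickingInvariant]⟩
  obtain ⟨r, -, hr⟩ := exists_min_image univ π univ_nonempty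
  obtain ⟨x, hxR, hx⟩ := exists_min_image R (c r) hR
  set π' := update π r (univ.sup π + 1)
  have hπ' : ∀ j ≠ r, π' j = π j := fun j hj => update_of_ne hj _ _
  have hπ'r : ∀ j ≠ r, π' j < π' r := fun j hj => by
    simpa [π', update_of_ne hj] using Nat.lt_succ_of_le (le_sup (mem_univ j))
  have hsub := erase_subset x R
  obtain ⟨Q, hQ, hQπ'⟩ := ih (R.erase x) (erase_ssubset hxR)
    (fun i e he => hc0 i e (hsub he)) (fun i e he => hc1 i e (hsub he)) π'
  have hxQ : ∀ j, x ∉ Q j := fun j h => notMem_erase x R (hQ.subset j h)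
  refine ⟨update Q r (insert x (Q r)), ?_, hQπ'.update_insert (fun j => hr j (mem_univ j)) hπ'
    hπ'r hxQ (fun j y hy => hx y (hsub (hQ.subset j hy))) (hc1 r x hxR)
    (fun j y hy => hc0 r y (hsub (hQ.subset j hy)))⟩
  simpa only [insert_erase hxR] using hQ.update_insert (notMem_erase x R) r

theorem exists_isAllocation_sum_le_sum_add_one [Nonempty α] [DecidableEq α]
    (c : α → ι → ℝ) (R : Finset ι) (hc0 : ∀ i, ∀ e ∈ R, 0 ≤ c i e)
    (hc1 : ∀ i, ∀ e ∈ R, c i e ≤ 1) :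
    ∃ Q, IsAllocation R Q ∧ ∀ i j, ∑ f ∈ Q i, c i f ≤ ∑ f ∈ Q j, c i f + 1 := by
  set π : α → ℕ := fun i => Fintype.equivFin α i
  obtain ⟨Q, hQ, hQπ⟩ := exists_isAllocation_pickingInvariant c R hc0 hc1 π
  refine ⟨Q, hQ, fun i j => ?_⟩
  have hQj : 0 ≤ ∑ f ∈ Q j, c i f := sum_nonneg fun e he => hc0 i e (hQ.subset j he)
  rcases lt_trichotomy (π i) (π j) with h | h | h
  · exact hQπ.1 i j h
  · obtain rfl : i = j := (Fintype.equivFin α).injective (Fin.ext h)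
    linarith
  · rcases (Q i).eq_empty_or_nonempty with hQi | hQi
    · rw [hQi, sum_empty]
      linarith
    · obtain ⟨y, hy, hle⟩ := hQπ.2 i j h hQi
      linarith [add_sum_erase (Q j) (c i) hy, hc0 i y (hQ.subset j hy)]

theorem exists_isApproxEFX_two_of_pregifts [Nonempty α] [DecidableEq α] (M S : Finset ι)
    (c : α → ι → ℝ) (hc0 : ∀ i, ∀ e ∈ M, 0 ≤ c i e) (hc1 : ∀ i, ∀ e ∈ M, c i e ≤ 1)
    (P : α → Finset ι) (hP : IsAllocation S P) (hSM : S ⊆ M)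
    (hP1 : ∀ i j, 1 ≤ ∑ f ∈ P j, c i f) (hPi : ∀ i, ∀ e ∈ M, ∑ f ∈ P i, c i f ≤ 1 + c i e) :
    ∃ X, IsAllocation M X ∧ IsApproxEFX 2 c X := by
  have hRM : M \ S ⊆ M := sdiff_subset
  obtain ⟨Q, hQ, hQ1⟩ := exists_isAllocation_sum_le_sum_add_one c (M \ S)
    (fun i e he => hc0 i e (hRM he)) (fun i e he => hc1 i e (hRM he))
  have hX := hP.union hQ disjoint_sdiff
  rw [union_sdiff_of_subset hSM] at hX
  refine ⟨_, hX, fun i j e he => ?_⟩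
  have hsplit : ∀ k, ∑ f ∈ P k ∪ Q k, c i f = ∑ f ∈ P k, c i f + ∑ f ∈ Q k, c i f :=
    fun k => sum_union (disjoint_sdiff.mono (hP.subset k) (hQ.subset k))
  rw [sum_erase_eq_sub he, hsplit, hsplit]
  linarith [hPi i e (hX.subset i he), hQ1 i j, hP1 i j,
    sum_nonneg fun f hf => hc0 i f (hRM (hQ.subset j hf))]

theorem exists_isAllocation_card_eq_one [DecidableEq α] (T : Finset ι) (j₀ : α)
    (hT : T.card + 1 = Fintype.card α) :
    ∃ G : α → Finset ι, IsAllocation T G ∧ G j₀ = ∅ ∧ ∀ i ≠ j₀, (G i).card = 1 := by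
  have e : {i // i ≠ j₀} ≃ T := Fintype.equivOfCardEq <| by
    simp only [ne_eq, Fintype.card_subtype_compl, Fintype.card_unique, Fintype.card_coe]
    omega
  refine ⟨fun i => if h : i = j₀ then ∅ else {(e ⟨i, h⟩ : ι)}, ⟨fun i j hij => ?_, ?_⟩,
    by simp, fun i hi => by simp [hi]⟩
  · by_cases hi : i = j₀
    · simp [hi]
    by_cases hj : j = j₀
    · simp [hj]
    simpa [hi, hj] using Subtype.val_injective.ne
      (e.injective.ne (a₁ := ⟨i, hi⟩) (a₂ := ⟨j, hj⟩) (Subtype.coe_ne_coe.1 hij))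
  · ext t
    simp only [mem_biUnion, mem_univ, true_and]
    constructor
    · rintro ⟨i, hi⟩
      split_ifs at hi with h
      · simp at hi
      · exact mem_singleton.1 hi ▸ (e _).2
    · intro ht
      obtain ⟨⟨i, hi⟩, hei⟩ := e.surjective ⟨t, ht⟩
      exact ⟨i, by simp [hi, hei]⟩

theorem exists_isApproxEFX_two_of_large_pregifts [DecidableEq α] (M T B : Finset ι)
    (c : α → ι → ℝ) (hc0 : ∀ i, ∀ e ∈ M, 0 ≤ c i e) (hc1 : ∀ i, ∀ e ∈ M, c i e ≤ 1)
    (hTM : T ⊆ M) (hT : ∀ i, ∀ e ∈ T, c i e = 1) (hTcard : T.card + 1 = Fintype.card α)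
    (hBM : B ⊆ M) (hBT : Disjoint B T) (j₀ : α) (hB1 : ∀ i, 1 ≤ ∑ f ∈ B, c i f)
    (hBj₀ : ∀ e ∈ M, ∑ f ∈ B, c j₀ f ≤ 1 + c j₀ e) :
    ∃ X, IsAllocation M X ∧ IsApproxEFX 2 c X := by
  have : Nonempty α := ⟨j₀⟩
  obtain ⟨G, hG, hGj₀, hGcard⟩ := exists_isAllocation_card_eq_one T j₀ hTcard
  have hGsum : ∀ i, ∀ j ≠ j₀, ∑ f ∈ G j, c i f = 1 := fun i j hj => by
    rw [sum_eq_card_of_forall_eq_one fun e he => hT i e (hG.subset j he), hGcard j hj,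
      Nat.cast_one]
  refine exists_isApproxEFX_two_of_pregifts M (B ∪ T) c hc0 hc1 _ (hG.update_union hBT j₀)
    (union_subset hBM hTM) (fun i j => ?_) (fun i e he => ?_)
  · rcases eq_or_ne j j₀ with rfl | hj
    · simpa [hGj₀] using hB1 i
    · rw [update_of_ne hj, hGsum i j hj]
  · rcases eq_or_ne i j₀ with rfl | hi
    · simpa [hGj₀] using hBj₀ e he
    · rw [update_of_ne hi, hGsum i i hi]
      linarith [hc0 i e he]

theorem exists_isApproxEFX_two_of_card_le [Nonempty α] [DecidableEq α] (M L : Finset ι)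
    (c : α → ι → ℝ) (hc0 : ∀ i, ∀ e ∈ M, 0 ≤ c i e) (hc1 : ∀ i, ∀ e ∈ M, c i e ≤ 1)
    (hLM : L ⊆ M) (hL : ∀ i, ∀ e ∈ L, c i e = 1) (hcard : Fintype.card α ≤ L.card) :
    ∃ X, IsAllocation M X ∧ IsApproxEFX 2 c X := by
  have hα := Fintype.card_pos (α := α)
  obtain ⟨t, ht⟩ : L.Nonempty := card_pos.1 (by omega)
  obtain ⟨T, hTL, hTcard⟩ := exists_subset_card_eq (s := L.erase t) (n := Fintype.card α - 1)
    (by rw [card_erase_of_mem ht]; omega)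
  have hTL' : T ⊆ L := hTL.trans (erase_subset t L)
  obtain ⟨j₀⟩ := ‹Nonempty α›
  refine exists_isApproxEFX_two_of_large_pregifts M T {t} c hc0 hc1 (hTL'.trans hLM)
    (fun i e he => hL i e (hTL' he)) (by omega) (singleton_subset_iff.2 (hLM ht))
    (disjoint_singleton_left.2 fun h => notMem_erase t L (hTL h)) j₀
    (fun i => by simp [hL i t ht]) (fun e he => ?_)
  simpa [hL j₀ t ht] using hc0 j₀ e he

theorem exists_isApproxEFX_two_of_one_le_mul_card [DecidableEq α] {ε : ℝ} (hε0 : 0 ≤ ε)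
    (M T : Finset ι) (c : α → ι → ℝ) (hcε : ∀ i, ∀ e ∈ M, ε ≤ c i e)
    (hc1 : ∀ i, ∀ e ∈ M, c i e ≤ 1) (hTM : T ⊆ M) (hT : ∀ i, ∀ e ∈ T, c i e = 1)
    (hTcard : T.card + 1 = Fintype.card α) (i₀ : α)
    (hi₀ : 1 ≤ ε * ((M \ T).filter (c i₀ · = ε)).card) :
    ∃ X, IsAllocation M X ∧ IsApproxEFX 2 c X := by
  have hε : 0 < ε := hε0.lt_of_ne (by rintro rfl; norm_num at hi₀)
  obtain ⟨B, hB, hBcard⟩ := exists_subset_card_eq (s := (M \ T).filter (c i₀ · = ε))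
    (n := ⌈ε⁻¹⌉₊) (Nat.ceil_le.2 ((inv_le_iff_one_le_mul₀' hε).2 hi₀))
  have hBM : B ⊆ M := hB.trans ((filter_subset _ _).trans sdiff_subset)
  have hBsum : ∀ i, ε * ⌈ε⁻¹⌉₊ ≤ ∑ f ∈ B, c i f := fun i => by
    simpa [hBcard, mul_comm] using card_nsmul_le_sum B (c i) ε fun e he => hcε i e (hBM he)
  refine exists_isApproxEFX_two_of_large_pregifts M T B c
    (fun i e he => hε0.trans (hcε i e he)) hc1 hTM hT hTcard hBM
    (disjoint_of_subset_left (hB.trans (filter_subset _ _)) sdiff_disjoint) i₀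
    (fun i => ((inv_le_iff_one_le_mul₀' hε).1 (Nat.le_ceil _)).trans (hBsum i)) (fun e he => ?_)
  have hB_eq : ∑ f ∈ B, c i₀ f = ε * ⌈ε⁻¹⌉₊ := by
    rw [sum_eq_card_nsmul fun e he => (mem_filter.1 (hB he)).2, hBcard, nsmul_eq_mul, mul_comm]
  have hceil : (⌈ε⁻¹⌉₊ : ℝ) < ε⁻¹ + 1 := Nat.ceil_lt_add_one (inv_nonneg.2 hε0)
  have : ε * ⌈ε⁻¹⌉₊ < 1 + ε := by
    calc ε * ⌈ε⁻¹⌉₊ < ε * (ε⁻¹ + 1) := mul_lt_mul_of_pos_left hceil hε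
      _ = 1 + ε := by rw [mul_add, mul_inv_cancel₀ hε.ne', mul_one]
  linarith [hcε i₀ e he]

theorem isApproxEFX_two_union_of_sum_lt_one [DecidableEq α] {T R : Finset ι} {c : α → ι → ℝ}
    {G Y : α → Finset ι} {j₀ : α} (hG : IsAllocation T G) (hGj₀ : G j₀ = ∅)
    (hGcard : ∀ i ≠ j₀, (G i).card = 1) (hT : ∀ i, ∀ e ∈ T, c i e = 1)
    (hY : IsAllocation R Y) (hTR : Disjoint T R) (hR0 : ∀ i, ∀ e ∈ R, 0 ≤ c i e)
    (hYlt : ∀ i, ∑ f ∈ Y i, c i f < 1)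
    (hYj₀ : ∀ i ≠ j₀, (Y i).Nonempty → 1 ≤ ∑ f ∈ Y j₀, c i f) :
    IsApproxEFX 2 c (fun i => G i ∪ Y i) := by
  have hsplit : ∀ i j, ∑ f ∈ G j ∪ Y j, c i f = ∑ f ∈ G j, c i f + ∑ f ∈ Y j, c i f :=
    fun i j => sum_union (hTR.mono (hG.subset j) (hY.subset j))
  have hGsum : ∀ i, ∀ j ≠ j₀, ∑ f ∈ G j, c i f = 1 := fun i j hj => by
    rw [sum_eq_card_of_forall_eq_one fun e he => hT i e (hG.subset j he), hGcard j hj,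
      Nat.cast_one]
  have hY0 : ∀ i j, 0 ≤ ∑ f ∈ Y j, c i f := fun i j =>
    sum_nonneg fun e he => hR0 i e (hY.subset j he)
  have hX1 : ∀ i, ∀ j ≠ j₀, 1 ≤ ∑ f ∈ G j ∪ Y j, c i f := fun i j hj => by
    linarith [hsplit i j, hGsum i j hj, hY0 i j]
  refine isApproxEFX_of_card_le_one_or_sum_le one_le_two (fun i j e he => ?_) fun i => ?_
  · rcases mem_union.1 he with he | he
    · exact (hT i e (hG.subset j he)).symm ▸ zero_le_one
    · exact hR0 i e (hY.subset j he)
  rcases eq_or_ne i j₀ with rfl | hi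
  · refine Or.inr fun j hj => ?_
    rw [hsplit, hGj₀, sum_empty, zero_add]
    linarith [hYlt i, hX1 i j hj]
  rcases (Y i).eq_empty_or_nonempty with hYi | hYi
  · exact Or.inl (by rw [hYi, union_empty, hGcard i hi])
  refine Or.inr fun j _ => ?_
  have hXj : 1 ≤ ∑ f ∈ G j ∪ Y j, c i f := by
    rcases eq_or_ne j j₀ with rfl | hj
    · rw [hsplit, hGj₀, sum_empty, zero_add]
      exact hYj₀ i hi hYi
    · exact hX1 i j hj
  linarith [hsplit i i, hGsum i i hi, hYlt i]

theorem exists_isApproxEFX_two_of_mul_card_lt_one [LinearOrder α] {ε : ℝ} (hε0 : 0 ≤ ε)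
    (M T : Finset ι) (c : α → ι → ℝ) (hbi : ∀ i, ∀ e ∈ M, c i e = ε ∨ c i e = 1)
    (hT : ∀ e, e ∈ T ↔ e ∈ M ∧ ∀ i, c i e = 1) (hTcard : T.card + 1 = Fintype.card α)
    (hsmall : ∀ i, ε * ((M \ T).filter (c i · = ε)).card < 1) :
    ∃ X, IsAllocation M X ∧ IsApproxEFX 2 c X := by
  have : Nonempty α := Fintype.card_pos_iff.1 (by omega)
  have hTM : T ⊆ M := fun e he => ((hT e).1 he).1
  have hfirst : ∀ e ∈ M \ T, ∃ i, c i e = ε ∧ ∀ l < i, c l e = 1 := by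
    intro e he
    obtain ⟨heM, heT⟩ := mem_sdiff.1 he
    have hsmall : ∃ i, c i e = ε := by
      by_contra! h
      exact heT ((hT e).2 ⟨heM, fun i => (hbi i e heM).resolve_left (h i)⟩)
    obtain ⟨i, hi⟩ := exists_minimal_of_wellFoundedLT _ hsmall
    exact ⟨i, hi.prop, fun l hl => (hbi l e heM).resolve_left (hi.not_prop_of_lt hl)⟩
  choose! f hfε hf1 using hfirst
  have hY := IsAllocation.filter_eq (M \ T) f
  set Y := fun i => (M \ T).filter (f · = i)
  obtain ⟨j₀, hj₀⟩ : ∃ j₀, ∀ i, (Y i).Nonempty → i ≤ j₀ ∧ (Y j₀).Nonempty := by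
    by_cases h : ∃ i, (Y i).Nonempty
    · obtain ⟨j₀, hj₀⟩ := exists_maximal_of_wellFoundedGT _ h
      exact ⟨j₀, fun i hi => ⟨not_lt.1 (hj₀.not_gt hi), hj₀.prop⟩⟩
    · exact ⟨Classical.arbitrary α, fun i hi => absurd ⟨i, hi⟩ h⟩
  obtain ⟨G, hG, hGj₀, hGcard⟩ := exists_isAllocation_card_eq_one T j₀ hTcard
  have hX := hG.union hY disjoint_sdiff
  rw [union_sdiff_of_subset hTM] at hX
  refine ⟨_, hX, isApproxEFX_two_union_of_sum_lt_one hG hGj₀ hGcard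
    (fun i e he => ((hT e).1 he).2 i) hY disjoint_sdiff (fun i e he => ?_) (fun i => ?_)
    fun i hi hYi => ?_⟩
  · rcases hbi i e (mem_sdiff.1 he).1 with h | h <;> rw [h]
    exacts [hε0, zero_le_one]
  · have hYi : Y i ⊆ (M \ T).filter (c i · = ε) := fun e he => by
      obtain ⟨heR, rfl⟩ := mem_filter.1 he
      exact mem_filter.2 ⟨heR, hfε e heR⟩
    rw [sum_eq_card_nsmul fun e he => (mem_filter.1 (hYi he)).2, nsmul_eq_mul, mul_comm]
    exact lt_of_le_of_lt (mul_le_mul_of_nonneg_left (by exact_mod_cast card_le_card hYi) hε0)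
      (hsmall i)
  · obtain ⟨hij₀, hYj₀⟩ := hj₀ i hYi
    rw [sum_eq_card_of_forall_eq_one fun e he => ?_]
    · exact_mod_cast card_pos.2 hYj₀
    obtain ⟨heR, rfl⟩ := mem_filter.1 he
    exact hf1 e heR i (lt_of_le_of_ne hij₀ hi)

end

/-- `n ≥ 2` agents with additive bi-valued cost functions taking values in `{ε, 1}`
with `0 ≤ ε < 1`.  Let `M⁺` be the set of consistently large items (cost `1` to
every agent).  If `|M⁺| ≥ n - 1`, then there exists a `2`-EFX allocation. -/
theorem stmt_18 {ι : Type*} [DecidableEq ι] (n : ℕ) (hn : 2 ≤ n) (M : Finset ι)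
    (c : Fin n → ι → ℝ) (ε : ℝ) (hε0 : 0 ≤ ε) (hε1 : ε < 1)
    (hbi : ∀ i, ∀ e ∈ M, c i e = ε ∨ c i e = 1)
    (Mplus : Finset ι)
    (hMplus : ∀ e, e ∈ Mplus ↔ e ∈ M ∧ ∀ i, c i e = 1)
    (hcard : n - 1 ≤ Mplus.card) :
    ∃ X : Fin n → Finset ι,
      (∀ i j, i ≠ j → Disjoint (X i) (X j)) ∧
      (Finset.univ.biUnion X = M) ∧
      (∀ i j : Fin n, ∀ e ∈ X i,
        ∑ f ∈ (X i).erase e, c i f ≤ 2 * ∑ f ∈ X j, c i f) := by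
  suffices ∃ X, IsAllocation M X ∧ IsApproxEFX 2 c X by
    obtain ⟨X, hX, hEFX⟩ := this
    exact ⟨X, hX.disjoint, hX.biUnion_eq, hEFX⟩
  have : Nonempty (Fin n) := ⟨⟨0, by omega⟩⟩
  have hcε : ∀ i, ∀ e ∈ M, ε ≤ c i e := fun i e he => by
    rcases hbi i e he with h | h <;> linarith
  have hc1 : ∀ i, ∀ e ∈ M, c i e ≤ 1 := fun i e he => by
    rcases hbi i e he with h | h <;> linarith
  have hMM : Mplus ⊆ M := fun e he => ((hMplus e).1 he).1
  have hMlarge : ∀ i, ∀ e ∈ Mplus, c i e = 1 := fun i e he => ((hMplus e).1 he).2 i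
  rcases le_or_gt n Mplus.card with hle | hlt
  · exact exists_isApproxEFX_two_of_card_le M Mplus c (fun i e he => hε0.trans (hcε i e he))
      hc1 hMM hMlarge (by rwa [Fintype.card_fin])
  have hMcard : Mplus.card + 1 = Fintype.card (Fin n) := by rw [Fintype.card_fin]; omega
  by_cases hbig : ∃ i, 1 ≤ ε * ((M \ Mplus).filter (c i · = ε)).card
  · obtain ⟨i₀, hi₀⟩ := hbig
    exact exists_isApproxEFX_two_of_one_le_mul_card hε0 M Mplus c hcε hc1 hMM hMlarge hMcard
      i₀ hi₀
  · exact exists_isApproxEFX_two_of_mul_card_lt_one hε0 M Mplus c hbi hMplus hMcard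
      (by simpa using hbig)
end

section
/- Let there be n agents with additive bi-valued cost functions taking values in {ε, 1} for some 0 ≤ ε < 1, and let M^- = {e : c_i(e) = ε for some agent i} be the set of items that are small to at least one agent. Then there exists a partition X⁰ = (X⁰_1,…,X⁰_n) of M^- into n pairwise disjoint bundles such that: (1) every agent receives only items small to her, i.e., c_i(e) = ε for every agent i and every e ∈ X⁰_i; (2) for all agents i, j with |X⁰_i| − |X⁰_j| ≥ 2, every item e ∈ X⁰_i satisfies c_j(e) = 1, i.e., c_j(X⁰_i) = |X⁰_i|; and (3) for all agents i, j, l with |X⁰_i| − |X⁰_j| = |X⁰_j| − |X⁰_l| = 1, either c_j(X⁰_i) = |X⁰_i| or c_l(X⁰_j) = |X⁰_j|. -/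
open Finset

section aux

variable {α κ : Type*} [Fintype α] [DecidableEq α] [DecidableEq κ]

/-- Number of elements assigned to `i` by `g`. -/
private def cnt (g : α → κ) (i : κ) : ℕ :=
  (Finset.univ.filter (fun e => g e = i)).card

private lemma cnt_update_self (g : α → κ) (x : α) (b : κ) (hb : b ≠ g x) :
    cnt (Function.update g x b) (g x) + 1 = cnt g (g x) := by
  have h : Finset.univ.filter (fun e => Function.update g x b e = g x)
      = (Finset.univ.filter (fun e => g e = g x)).erase x := by
    ext e
    rcases eq_or_ne e x with rfl | h
    · simp [Function.update_self, hb]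
    · simp [Function.update_of_ne h, h]
  have hx : x ∈ Finset.univ.filter (fun e => g e = g x) := by simp
  have hpos : 1 ≤ (Finset.univ.filter (fun e => g e = g x)).card :=
    Finset.card_pos.mpr ⟨x, hx⟩
  rw [cnt, cnt, h, Finset.card_erase_of_mem hx]
  omega

private lemma cnt_update_target (g : α → κ) (x : α) (b : κ) (hb : b ≠ g x) :
    cnt (Function.update g x b) b = cnt g b + 1 := by
  have h : Finset.univ.filter (fun e => Function.update g x b e = b)
      = insert x (Finset.univ.filter (fun e => g e = b)) := by
    ext e
    rcases eq_or_ne e x with rfl | h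
    · simp [Function.update_self]
    · simp [Function.update_of_ne h, h]
  have hx : x ∉ Finset.univ.filter (fun e => g e = b) := by
    simp only [Finset.mem_filter, Finset.mem_univ, true_and]
    exact fun h => hb h.symm
  rw [cnt, cnt, h, Finset.card_insert_of_notMem hx]

private lemma cnt_update_other (g : α → κ) (x : α) (b : κ) (i : κ)
    (hi1 : i ≠ g x) (hi2 : i ≠ b) :
    cnt (Function.update g x b) i = cnt g i := by
  have h : Finset.univ.filter (fun e => Function.update g x b e = i)
      = Finset.univ.filter (fun e => g e = i) := by
    ext e
    rcases eq_or_ne e x with rfl | h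
    · simp [Function.update_self, hi1.symm, hi2.symm]
    · simp [Function.update_of_ne h]
  rw [cnt, cnt, h]

/-- Potential: sum of squares of bundle sizes. -/
private def pot [Fintype κ] (g : α → κ) : ℕ := ∑ i, (cnt g i) ^ 2

private lemma pot_lt [Fintype κ] (g g' : α → κ) (i l : κ) (hil : i ≠ l)
    (hi : cnt g' i + 1 = cnt g i) (hl : cnt g' l = cnt g l + 1)
    (hrest : ∀ k, k ≠ i → k ≠ l → cnt g' k = cnt g k)
    (hgap : cnt g l + 2 ≤ cnt g i) : pot g' < pot g := by
  have hsub : ({i, l} : Finset κ) ⊆ Finset.univ := Finset.subset_univ _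
  have key : ∀ h : α → κ, pot h
      = ∑ k ∈ Finset.univ \ {i, l}, (cnt h k) ^ 2 + ((cnt h i) ^ 2 + (cnt h l) ^ 2) := by
    intro h
    rw [pot, ← Finset.sum_sdiff hsub, Finset.sum_pair hil]
  rw [key, key]
  have hr : ∑ k ∈ Finset.univ \ {i, l}, (cnt g' k) ^ 2
      = ∑ k ∈ Finset.univ \ {i, l}, (cnt g k) ^ 2 := by
    refine Finset.sum_congr rfl fun k hk => ?_
    simp only [Finset.mem_sdiff, Finset.mem_insert, Finset.mem_singleton] at hk
    rw [hrest k (fun h => hk.2 (Or.inl h)) (fun h => hk.2 (Or.inr h))]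
  rw [hr]
  have := hi; have := hl
  refine Nat.add_lt_add_left ?_ _
  nlinarith [hi, hl, hgap]

end aux

/-- `n` agents with additive bi-valued cost functions taking values in `{ε, 1}` with
`0 ≤ ε < 1`, and `M⁻ = {e ∈ M : c_i(e) = ε for some i}` is the set of items small to
at least one agent.  Then there is a partition `X⁰` of `M⁻` into `n` pairwise
disjoint bundles such that: (1) every agent receives only items small to her;
(2) whenever `|X⁰_i| - |X⁰_j| ≥ 2`, every item of `X⁰_i` costs `1` to agent `j`;
(3) whenever `|X⁰_i| - |X⁰_j| = |X⁰_j| - |X⁰_l| = 1`, either every item of `X⁰_i`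
costs `1` to `j` or every item of `X⁰_j` costs `1` to `l`. -/
theorem stmt_19 {ι : Type*} [DecidableEq ι] (n : ℕ) (M : Finset ι)
    (c : Fin n → ι → ℝ) (ε : ℝ) (hε0 : 0 ≤ ε) (hε1 : ε < 1)
    (hbi : ∀ i, ∀ e ∈ M, c i e = ε ∨ c i e = 1)
    (Mneg : Finset ι)
    (hMneg : ∀ e, e ∈ Mneg ↔ e ∈ M ∧ ∃ i, c i e = ε) :
    ∃ X0 : Fin n → Finset ι,
      (∀ i j, i ≠ j → Disjoint (X0 i) (X0 j)) ∧
      (Finset.univ.biUnion X0 = Mneg) ∧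
      (∀ i, ∀ e ∈ X0 i, c i e = ε) ∧
      (∀ i j : Fin n, (X0 j).card + 2 ≤ (X0 i).card → ∀ e ∈ X0 i, c j e = 1) ∧
      (∀ i j l : Fin n,
        (X0 i).card = (X0 j).card + 1 → (X0 j).card = (X0 l).card + 1 →
        (∀ e ∈ X0 i, c j e = 1) ∨ (∀ e ∈ X0 j, c l e = 1)) := by
  classical
  -- a valid assignment exists
  have hvalid₀ : ∀ e : {x // x ∈ Mneg}, ∃ i, c i e.1 = ε := fun e => ((hMneg e.1).1 e.2).2
  choose g₀ hg₀ using hvalid₀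
  set S : Finset ({x // x ∈ Mneg} → Fin n) :=
    Finset.univ.filter (fun g => ∀ e, c (g e) e.1 = ε) with hSdef
  have hS₀ : g₀ ∈ S := by simp [hSdef, hg₀]
  obtain ⟨g, hgS, hmin⟩ := S.exists_min_image pot ⟨g₀, hS₀⟩
  have hgval : ∀ e, c (g e) e.1 = ε := by
    have := hgS; simp only [hSdef, Finset.mem_filter, Finset.mem_univ, true_and] at this
    exact this
  set X0 : Fin n → Finset ι :=
    fun i => (Finset.univ.filter (fun e : {x // x ∈ Mneg} => g e = i)).image Subtype.val
    with hX0def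
  have hmem : ∀ (i : Fin n) (a : ι), a ∈ X0 i ↔ ∃ h : a ∈ Mneg, g ⟨a, h⟩ = i := by
    intro i a
    constructor
    · intro ha
      simp only [hX0def, Finset.mem_image, Finset.mem_filter] at ha
      obtain ⟨e, ⟨_, hge⟩, hea⟩ := ha
      exact ⟨hea ▸ e.2, by cases e; cases hea; exact hge⟩
    · rintro ⟨h, hg⟩
      simp only [hX0def, Finset.mem_image, Finset.mem_filter]
      exact ⟨⟨a, h⟩, ⟨Finset.mem_univ _, hg⟩, rfl⟩
  have hcard : ∀ i, (X0 i).card = cnt g i := by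
    intro i
    exact Finset.card_image_of_injective _ Subtype.val_injective
  refine ⟨X0, ?_, ?_, ?_, ?_, ?_⟩
  · -- disjointness
    intro i j hij
    rw [Finset.disjoint_left]
    intro a hai haj
    obtain ⟨h1, hg1⟩ := (hmem i a).1 hai
    obtain ⟨h2, hg2⟩ := (hmem j a).1 haj
    exact hij (hg1 ▸ hg2 ▸ rfl)
  · -- covers Mneg
    ext a
    simp only [Finset.mem_biUnion, Finset.mem_univ, true_and]
    constructor
    · rintro ⟨i, hai⟩
      exact ((hmem i a).1 hai).choose
    · intro ha
      exact ⟨g ⟨a, ha⟩, (hmem _ a).2 ⟨ha, rfl⟩⟩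
  · -- only small items
    intro i e he
    obtain ⟨h, hg⟩ := (hmem i e).1 he
    rw [← hg]
    exact hgval ⟨e, h⟩
  · -- condition (2)
    intro i j hji e he
    by_contra hne
    obtain ⟨hm, hgx⟩ := (hmem i e).1 he
    have heM : e ∈ M := ((hMneg e).1 hm).1
    have hce : c j e = ε := (hbi j e heM).resolve_right hne
    rw [hcard, hcard] at hji
    have hij : i ≠ j := by
      rintro rfl; omega
    set x : {x // x ∈ Mneg} := ⟨e, hm⟩ with hxdef
    set g' := Function.update g x j with hg'def
    have hval' : ∀ e', c (g' e') e'.1 = ε := by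
      intro e'
      rcases eq_or_ne e' x with rfl | h
      · rw [hg'def, Function.update_self]; exact hce
      · rw [hg'def, Function.update_of_ne h]; exact hgval e'
    have hg'S : g' ∈ S := by simp [hSdef, hval']
    have hbx : j ≠ g x := by rw [hgx]; exact hij.symm
    have hi' : cnt g' i + 1 = cnt g i := by
      have := cnt_update_self g x j hbx
      rwa [hgx] at this
    have hl' : cnt g' j = cnt g j + 1 := cnt_update_target g x j hbx
    have hrest : ∀ k, k ≠ i → k ≠ j → cnt g' k = cnt g k := by
      intro k hki hkj
      exact cnt_update_other g x j k (by rw [hgx]; exact hki) hkj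
    have hlt : pot g' < pot g := pot_lt g g' i j hij hi' hl' hrest hji
    exact absurd (hmin g' hg'S) (not_le.mpr hlt)
  · -- condition (3)
    intro i j l h1 h2
    rw [hcard, hcard] at h1
    rw [hcard, hcard] at h2
    by_contra hcon
    push_neg at hcon
    obtain ⟨⟨ex, hex, hcx⟩, ⟨ey, hey, hcy⟩⟩ := hcon
    obtain ⟨hmx, hgx⟩ := (hmem i ex).1 hex
    obtain ⟨hmy, hgy⟩ := (hmem j ey).1 hey
    have hexM : ex ∈ M := ((hMneg ex).1 hmx).1
    have heyM : ey ∈ M := ((hMneg ey).1 hmy).1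
    have hcex : c j ex = ε := (hbi j ex hexM).resolve_right hcx
    have hcey : c l ey = ε := (hbi l ey heyM).resolve_right hcy
    have hij : i ≠ j := by rintro rfl; omega
    have hjl : j ≠ l := by rintro rfl; omega
    have hil : i ≠ l := by rintro rfl; omega
    set x : {x // x ∈ Mneg} := ⟨ex, hmx⟩ with hxdef
    set y : {x // x ∈ Mneg} := ⟨ey, hmy⟩ with hydef
    have hyx : y ≠ x := by
      intro h
      apply hij
      rw [← hgx, ← hgy, h]
    set g1 := Function.update g x j with hg1def
    have hg1y : g1 y = j := by rw [hg1def, Function.update_of_ne hyx]; exact hgy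
    set g' := Function.update g1 y l with hg'def
    have hval' : ∀ e', c (g' e') e'.1 = ε := by
      intro e'
      rcases eq_or_ne e' y with rfl | hy
      · rw [hg'def, Function.update_self]; exact hcey
      · rw [hg'def, Function.update_of_ne hy]
        rcases eq_or_ne e' x with rfl | hx
        · rw [hg1def, Function.update_self]; exact hcex
        · rw [hg1def, Function.update_of_ne hx]; exact hgval e'
    have hg'S : g' ∈ S := by simp [hSdef, hval']
    have hbx : j ≠ g x := by rw [hgx]; exact hij.symm
    have hby : l ≠ g1 y := by rw [hg1y]; exact hjl.symm
    have c1i : cnt g1 i + 1 = cnt g i := by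
      have := cnt_update_self g x j hbx
      rwa [hgx] at this
    have c1j : cnt g1 j = cnt g j + 1 := cnt_update_target g x j hbx
    have c1l : cnt g1 l = cnt g l :=
      cnt_update_other g x j l (by rw [hgx]; exact hil.symm) hjl.symm
    have c2i : cnt g' i = cnt g1 i :=
      cnt_update_other g1 y l i (by rw [hg1y]; exact hij) hil
    have c2j : cnt g' j + 1 = cnt g1 j := by
      have := cnt_update_self g1 y l hby
      rwa [hg1y] at this
    have c2l : cnt g' l = cnt g1 l + 1 := cnt_update_target g1 y l hby
    have hi' : cnt g' i + 1 = cnt g i := by rw [c2i]; exact c1i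
    have hl' : cnt g' l = cnt g l + 1 := by omega
    have hrest : ∀ k, k ≠ i → k ≠ l → cnt g' k = cnt g k := by
      intro k hki hkl
      rcases eq_or_ne k j with rfl | hkj
      · omega
      · have a1 : cnt g1 k = cnt g k :=
          cnt_update_other g x j k (by rw [hgx]; exact hki) hkj
        have a2 : cnt g' k = cnt g1 k :=
          cnt_update_other g1 y l k (by rw [hg1y]; exact hkj) hkl
        rw [a2, a1]
    have hgap : cnt g l + 2 ≤ cnt g i := by omega
    have hlt : pot g' < pot g := pot_lt g g' i l hil hi' hl' hrest hgap
    exact absurd (hmin g' hg'S) (not_le.mpr hlt)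
end
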